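/- arXiv:2605.26479 — 4 statements merged into one kernel-verified Lean document; each statement's English description precedes it below -/
import Mathlib

section
/- If G is a graph of order n and u, v are nonadjacent vertices of G with deg_G(u) + deg_G(v) ≥ n, then G is hamiltonian if and only if G + uv is hamiltonian. -/
open SimpleGraph

/-- Edge sets of Hamiltonian cycles of `G` (cycles counted as unordered edge sets). -/
def hamCycleSets {V : Type*} [Fintype V] [DecidableEq V] (G : SimpleGraph V) :
    Set (Finset (Sym2 V)) :=
  {s | ∃ (v : V) (w : G.Walk v v), w.IsHamiltonianCycle ∧ w.edges.toFinset = s}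

/-- Edge sets of Hamiltonian paths of `G` (paths counted up to reversal). -/
def hamPathSets {V : Type*} [Fintype V] [DecidableEq V] (G : SimpleGraph V) :
    Set (Finset (Sym2 V)) :=
  {s | ∃ (u v : V) (w : G.Walk u v), w.IsHamiltonian ∧ w.edges.toFinset = s}

/-- Edge sets of paths of length `k` in `G` (paths counted up to reversal). -/
def pathSets {V : Type*} [DecidableEq V] (G : SimpleGraph V) (k : ℕ) :
    Set (Finset (Sym2 V)) :=
  {s | ∃ (u v : V) (w : G.Walk u v), w.IsPath ∧ w.length = k ∧ w.edges.toFinset = s}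

/-- `G` is maximally nonhamiltonian. -/
def MaxNonHam {V : Type*} [Fintype V] [DecidableEq V] (G : SimpleGraph V) : Prop :=
  ¬ G.IsHamiltonian ∧ ∀ u v : V, u ≠ v → ¬ G.Adj u v →
    (G ⊔ SimpleGraph.fromEdgeSet {s(u, v)}).IsHamiltonian

/-- The graph `K_{n-1} · K_2`: a clique on the first `n-1` vertices of `Fin n`
together with a pendant edge joining the last vertex to vertex `0`. -/
def KK (n : ℕ) : SimpleGraph (Fin n) :=
  SimpleGraph.fromRel (fun i j => (i.val < n - 1 ∧ j.val < n - 1) ∨ i.val = 0 ∨ j.val = 0)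

section BondyChvatalAux

open SimpleGraph.Walk List

variable {V : Type*} {G : SimpleGraph V}

lemma myLengthDrop {x y : V} (p : G.Walk x y) (n : ℕ) : (p.drop n).length = p.length - n := by
  induction p generalizing n with
  | nil => cases n <;> simp [Walk.drop]
  | cons h q ih =>
    cases n with
    | zero => simp [Walk.drop]
    | succ n => simpa [Walk.drop] using ih n

lemma myGetVertDrop {x y : V} (p : G.Walk x y) (n m : ℕ) :
    (p.drop n).getVert m = p.getVert (n + m) := by
  induction p generalizing n m with
  | nil => cases n <;> simp [Walk.drop, Walk.getVert_of_length_le]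
  | cons h q ih =>
    cases n with
    | zero => simp [Walk.drop]
    | succ n => simpa [Walk.drop, Walk.getVert_cons_succ, Nat.succ_add] using ih n m

lemma mySupportMap {x y : V} (p : G.Walk x y) :
    p.support = (List.range (p.length + 1)).map p.getVert := by
  induction p with
  | nil => simp [List.range_succ]
  | cons h q ih =>
    rw [Walk.support_cons, ih, Walk.length_cons]
    rw [List.range_succ_eq_map (n := q.length + 1), List.map_cons, List.map_map]
    congr 1

lemma myGetVertInj {x y : V} {p : G.Walk x y} (hp : p.support.Nodup) {i j : ℕ}
    (hi : i ≤ p.length) (hj : j ≤ p.length) (h : p.getVert i = p.getVert j) : i = j := by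
  rw [mySupportMap] at hp
  exact List.inj_on_of_nodup_map hp (List.mem_range.2 (by omega)) (List.mem_range.2 (by omega)) h

-- the second vertex lemma: an edge s(x,c) in a path starting at x forces c to be the 2nd vertex
lemma myAdjStart {x y c : V} (p : G.Walk x y) (hp : p.IsPath) (he : s(x, c) ∈ p.edges) :
    c = p.getVert 1 := by
  cases p with
  | nil => simp at he
  | cons h q =>
    rw [Walk.edges_cons, List.mem_cons] at he
    rcases he with he | he
    · rw [Sym2.eq_iff] at he
      rcases he with ⟨-, h2⟩ | ⟨h1, -⟩
      · rw [h2]; exact ((Walk.getVert_cons_succ (n := 0) q h).trans (Walk.getVert_zero q)).symm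
      · exact absurd h1 h.ne
    · exact absurd (Walk.fst_mem_support_of_mem_edges q he)
        ((Walk.cons_isPath_iff h q).mp hp).2

-- tail of reverse of closed walk is a permutation of tail of support
lemma myTailRevPerm {a : V} (p : G.Walk a a) (hp : ¬ p.Nil) :
    p.reverse.support.tail ~ p.support.tail := by
  have h1 : p.support = a :: p.support.tail := p.support_eq_cons
  have h2 : p.support.tail ≠ [] := by
    intro hh
    have := p.support_eq_cons
    rw [hh] at this
    exact hp (Walk.nil_iff_support_eq.mpr this)
  rcases List.eq_nil_or_concat p.support.tail with hnil | ⟨l', e, hl'⟩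
  · exact absurd hnil h2
  · rw [List.concat_eq_append] at hl'
    have hgl : p.support.getLast? = some a := by
      rw [List.getLast?_eq_getLast (by simp), p.getLast_support]
    rw [h1, hl'] at hgl
    have hgl2 : ((a :: l') ++ [e]).getLast? = some e := List.getLast?_concat
    rw [show a :: (l' ++ [e]) = (a :: l') ++ [e] from rfl] at hgl
    have he : e = a := by rw [hgl] at hgl2; exact (Option.some.inj hgl2).symm
    rw [Walk.support_reverse, h1, hl', he]
    have : ((a :: (l' ++ [a])).reverse).tail = l'.reverse ++ [a] := by simp
    rw [this]
    exact l'.reverse_perm.append_right [a]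

lemma myHamRotate [DecidableEq V] {a u : V} {C : G.Walk a a} (hC : C.IsHamiltonianCycle)
    (hu : u ∈ C.support) : (C.rotate u hu).IsHamiltonianCycle := by
  rw [Walk.isHamiltonianCycle_iff_isCycle_and_support_count_tail_eq_one] at *
  exact ⟨hC.1.rotate hu, fun w => by
    rw [(Walk.support_rotate C u hu).perm.count_eq]; exact hC.2 w⟩

lemma myHamReverse [DecidableEq V] {a : V} {C : G.Walk a a} (hC : C.IsHamiltonianCycle) :
    C.reverse.IsHamiltonianCycle := by
  have hperm := myTailRevPerm C hC.isCycle.not_nil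
  rw [Walk.isHamiltonianCycle_iff_isCycle_and_support_count_tail_eq_one] at *
  refine ⟨?_, fun w => by rw [hperm.count_eq]; exact hC.2 w⟩
  rw [Walk.isCycle_def] at *
  refine ⟨?_, ?_, hperm.nodup_iff.mpr hC.1.2.2⟩
  · rw [Walk.isTrail_def, Walk.edges_reverse]
    exact List.nodup_reverse.mpr hC.1.1.edges_nodup
  · intro hh
    have := hC.1.2.1
    rw [← Walk.reverse_reverse C, hh] at this
    exact this Walk.reverse_nil

-- second vertex of C or C.reverse is v when edge s(u,v) in cycle C at u
lemma mySndOr {u v : V} (_huv : u ≠ v) {C : G.Walk u u} (hC : C.IsCycle)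
    (he : s(u, v) ∈ C.edges) : C.getVert 1 = v ∨ C.reverse.getVert 1 = v := by
  have h3 := hC.three_le_length
  cases C with
  | nil => simp at he
  | cons h q =>
    rw [Walk.edges_cons, List.mem_cons] at he
    have hq := (Walk.cons_isCycle_iff q h).mp hC
    rcases he with he | he
    · left
      rw [Sym2.eq_iff] at he
      rcases he with ⟨-, h2⟩ | ⟨h1, -⟩
      · rw [h2]; exact (Walk.getVert_cons_succ (n := 0) q h).trans (Walk.getVert_zero q)
      · exact absurd h1 h.ne
    · right
      have hrev : s(u, v) ∈ q.reverse.edges := by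
        rw [Walk.edges_reverse, List.mem_reverse]; exact he
      have := myAdjStart q.reverse hq.1.reverse hrev
      rw [Walk.reverse_cons, Walk.getVert_append]
      have hlen : 1 < q.reverse.length := by
        rw [Walk.length_reverse]
        simp only [Walk.length_cons] at h3
        omega
      rw [if_pos hlen]
      exact this.symm

lemma mySplice {V : Type*} [Fintype V] [DecidableEq V] {G : SimpleGraph V} {x y : V}
    (hxy : x ≠ y) (hadj : ¬ G.Adj x y)
    (hdeg : Fintype.card V ≤ (G.neighborSet x).ncard + (G.neighborSet y).ncard)
    (P : G.Walk x y) (hP : P.IsHamiltonian) : G.IsHamiltonian := by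
  classical
  have hnodup : P.support.Nodup := hP.isPath.support_nodup
  have hlen : P.length = Fintype.card V - 1 := hP.length_eq
  have hcardpos : 1 ≤ Fintype.card V := Fintype.card_pos_iff.mpr ⟨x⟩
  set A := (Finset.range P.length).filter (fun i => G.Adj x (P.getVert (i+1))) with hA
  set B := (Finset.range P.length).filter (fun i => G.Adj y (P.getVert i)) with hB
  have hAcard : A.card = (G.neighborSet x).ncard := by
    have hset : G.neighborSet x = ↑(Finset.univ.filter (fun w => G.Adj x w)) := by
      ext w; simp [SimpleGraph.mem_neighborSet]
    rw [hset, Set.ncard_coe_finset]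
    apply Finset.card_bij (fun a _ => P.getVert (a+1))
    · intro a ha
      simp only [hA, Finset.mem_filter, Finset.mem_range] at ha
      simp [ha.2]
    · intro a1 h1 a2 h2 heq
      simp only [hA, Finset.mem_filter, Finset.mem_range] at h1 h2
      have := myGetVertInj hnodup (by omega : a1 + 1 ≤ P.length) (by omega : a2 + 1 ≤ P.length) heq
      omega
    · intro b hb
      simp only [Finset.mem_filter, Finset.mem_univ, true_and] at hb
      obtain ⟨n, hn, hnl⟩ := Walk.mem_support_iff_exists_getVert.mp (hP.mem_support b)
      have hn0 : n ≠ 0 := by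
        intro h0; rw [h0, Walk.getVert_zero] at hn
        exact G.irrefl (hn ▸ hb)
      refine ⟨n - 1, ?_, ?_⟩
      · simp only [hA, Finset.mem_filter, Finset.mem_range]
        constructor
        · omega
        · rw [show n - 1 + 1 = n by omega, hn]; exact hb
      · rw [show n - 1 + 1 = n by omega, hn]
  have hBcard : B.card = (G.neighborSet y).ncard := by
    have hset : G.neighborSet y = ↑(Finset.univ.filter (fun w => G.Adj y w)) := by
      ext w; simp [SimpleGraph.mem_neighborSet]
    rw [hset, Set.ncard_coe_finset]
    apply Finset.card_bij (fun a _ => P.getVert a)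
    · intro a ha
      simp only [hB, Finset.mem_filter, Finset.mem_range] at ha
      simp [ha.2]
    · intro a1 h1 a2 h2 heq
      simp only [hB, Finset.mem_filter, Finset.mem_range] at h1 h2
      exact myGetVertInj hnodup (by omega : a1 ≤ P.length) (by omega : a2 ≤ P.length) heq
    · intro b hb
      simp only [Finset.mem_filter, Finset.mem_univ, true_and] at hb
      obtain ⟨n, hn, hnl⟩ := Walk.mem_support_iff_exists_getVert.mp (hP.mem_support b)
      have hnL : n ≠ P.length := by
        intro h0; rw [h0, Walk.getVert_length] at hn
        exact G.irrefl (hn ▸ hb)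
      refine ⟨n, ?_, hn⟩
      simp only [hB, Finset.mem_filter, Finset.mem_range]
      exact ⟨by omega, hn ▸ hb⟩
  have hABne : (A ∩ B).Nonempty := by
    by_contra hcon
    rw [Finset.not_nonempty_iff_eq_empty] at hcon
    have h1 := Finset.card_union_add_card_inter A B
    have h2 : (A ∪ B).card ≤ P.length := by
      calc (A ∪ B).card ≤ (Finset.range P.length).card :=
            Finset.card_le_card (Finset.union_subset (Finset.filter_subset _ _)
              (Finset.filter_subset _ _))
        _ = P.length := Finset.card_range _
    rw [hcon, Finset.card_empty] at h1
    omega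
  obtain ⟨i, hiAB⟩ := hABne
  rw [Finset.mem_inter] at hiAB
  have hiL : i < P.length := Finset.mem_range.mp (Finset.mem_of_mem_filter i hiAB.1)
  have adjx : G.Adj x (P.getVert (i+1)) := (Finset.mem_filter.mp hiAB.1).2
  have adjy : G.Adj y (P.getVert i) := (Finset.mem_filter.mp hiAB.2).2
  -- construction
  let Q2 : G.Walk (P.getVert (i+1)) y := P.drop (i+1)
  have hrevert : P.reverse.getVert (P.length - i) = P.getVert i := by
    rw [Walk.getVert_reverse]; congr 1; omega
  let Q1 : G.Walk (P.getVert i) x := (P.reverse.drop (P.length - i)).copy hrevert rfl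
  let R : G.Walk (P.getVert (i+1)) x := Q2.append (Walk.cons adjy Q1)
  have hQ2len : Q2.length = P.length - (i+1) := myLengthDrop P (i+1)
  have hQ1len : Q1.length = i := by
    show ((P.reverse.drop (P.length - i)).copy hrevert rfl).length = i
    rw [Walk.length_copy, myLengthDrop, Walk.length_reverse]; omega
  have hQ2supp : Q2.support = (List.range (P.length - i)).map (fun m => P.getVert (i+1+m)) := by
    rw [mySupportMap, hQ2len, show P.length - (i+1) + 1 = P.length - i by omega]
    refine List.map_congr_left (fun m _ => ?_)
    exact myGetVertDrop P (i+1) m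
  have hQ1supp : Q1.support = (List.range (i+1)).map (fun m => P.getVert (i - m)) := by
    rw [mySupportMap, hQ1len]
    refine List.map_congr_left (fun m hm => ?_)
    rw [List.mem_range] at hm
    show ((P.reverse.drop (P.length - i)).copy hrevert rfl).getVert m = _
    rw [Walk.getVert_copy, myGetVertDrop, Walk.getVert_reverse]
    congr 1; omega
  have hRsupp : R.support = Q2.support ++ Q1.support := by
    show (Q2.append (Walk.cons adjy Q1)).support = _
    rw [Walk.support_append, Walk.support_cons, List.tail_cons]
  have hperm : ((List.range (P.length - i)).map (fun m => i+1+m) ++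
      (List.range (i+1)).map (fun m => i - m)) ~ List.range (P.length + 1) := by
    apply List.perm_of_nodup_nodup_toFinset_eq
    · apply List.Nodup.append
      · exact List.nodup_range.map (fun m1 m2 h => by omega)
      · apply List.Nodup.map_on (fun m1 h1 m2 h2 h => ?_) List.nodup_range
        rw [List.mem_range] at h1 h2; omega
      · intro k h1 h2
        rw [List.mem_map] at h1 h2
        obtain ⟨m1, hm1, he1⟩ := h1
        obtain ⟨m2, hm2, he2⟩ := h2
        rw [List.mem_range] at hm1 hm2
        omega
    · exact List.nodup_range
    · ext k
      simp only [List.toFinset_append, Finset.mem_union, List.mem_toFinset, List.mem_append,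
        List.mem_map, List.mem_range]
      constructor
      · rintro (⟨m, hm, rfl⟩ | ⟨m, hm, rfl⟩) <;> omega
      · intro hk
        by_cases hk2 : i + 1 ≤ k
        · exact Or.inl ⟨k - (i+1), by omega, by omega⟩
        · exact Or.inr ⟨i - k, by omega, by omega⟩
  have hRperm : R.support ~ P.support := by
    rw [hRsupp, hQ2supp, hQ1supp, mySupportMap P]
    have := hperm.map P.getVert
    simpa [List.map_append, List.map_map, Function.comp_def] using this
  have hRnodup : R.support.Nodup := hRperm.nodup_iff.mpr hnodup
  have hRpath : R.IsPath := Walk.IsPath.mk' hRnodup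
  have hxb : s(x, P.getVert (i+1)) ∉ R.edges := by
    intro hmem
    have hmem' : s(x, P.getVert (i+1)) ∈ Q2.edges ++ (Walk.cons adjy Q1).edges := by
      rw [← Walk.edges_append]; exact hmem
    rw [Walk.edges_cons, List.mem_append, List.mem_cons] at hmem'
    rcases hmem' with h1 | h2 | h3
    · have hx2 : x ∈ Q2.support := Walk.fst_mem_support_of_mem_edges Q2 h1
      rw [hQ2supp, List.mem_map] at hx2
      obtain ⟨m, hm, heq⟩ := hx2
      rw [List.mem_range] at hm
      have := myGetVertInj hnodup (by omega : i+1+m ≤ P.length) (by omega : 0 ≤ P.length)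
        (heq.trans (Walk.getVert_zero P).symm)
      omega
    · rw [Sym2.eq_iff] at h2
      rcases h2 with ⟨h2a, -⟩ | ⟨h2a, -⟩
      · exact hxy h2a
      · rw [← h2a] at adjy
        exact hadj (G.adj_symm adjy)
    · have hb1 : P.getVert (i+1) ∈ Q1.support := Walk.snd_mem_support_of_mem_edges Q1 h3
      rw [hQ1supp, List.mem_map] at hb1
      obtain ⟨m, hm, heq⟩ := hb1
      rw [List.mem_range] at hm
      have := myGetVertInj hnodup (by omega : i - m ≤ P.length) (by omega : i+1 ≤ P.length) heq
      omega
  have hC : (Walk.cons adjx R).IsCycle := (Walk.cons_isCycle_iff R adjx).mpr ⟨hRpath, hxb⟩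
  intro _
  refine ⟨x, Walk.cons adjx R, ?_⟩
  rw [Walk.isHamiltonianCycle_iff_isCycle_and_support_count_tail_eq_one]
  refine ⟨hC, fun w => ?_⟩
  rw [Walk.support_cons, List.tail_cons, hRperm.count_eq]
  exact hP w

lemma myExtract {V : Type*} [DecidableEq V] {G' : SimpleGraph V} {u v : V} (D : G'.Walk u u)
    (hD : D.IsHamiltonianCycle) (h1 : D.getVert 1 = v) :
    ∃ q : G'.Walk v u, q.IsPath ∧ (∀ w, w ∈ q.support) ∧ s(u, v) ∉ q.edges := by
  cases D with
  | nil => exact absurd rfl hD.isCycle.ne_nil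
  | cons h q =>
    have hb := ((Walk.getVert_cons_succ (n := 0) q h).trans (Walk.getVert_zero q)).symm.trans h1
    subst hb
    have hq := (Walk.cons_isCycle_iff q h).mp hD.isCycle
    refine ⟨q, hq.1, ?_, hq.2⟩
    intro w
    have hw := hD.mem_support w
    rw [Walk.support_cons, List.mem_cons] at hw
    rcases hw with rfl | hw
    · exact q.end_mem_support
    · exact hw


end BondyChvatalAux

theorem stmt5 {V : Type*} [Fintype V] [DecidableEq V] (G : SimpleGraph V)
    (u v : V) (huv : u ≠ v) (h : ¬ G.Adj u v)
    (hdeg : Fintype.card V ≤ (G.neighborSet u).ncard + (G.neighborSet v).ncard) :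
    G.IsHamiltonian ↔ (G ⊔ SimpleGraph.fromEdgeSet {s(u, v)}).IsHamiltonian := by
  classical
  constructor
  · intro hG
    exact hG.mono le_sup_left
  · intro hG' hn1
    have key : ∀ (D : (G ⊔ SimpleGraph.fromEdgeSet {s(u, v)}).Walk u u),
        D.IsHamiltonianCycle → D.getVert 1 = v → G.IsHamiltonian := by
      intro D hD h1
      obtain ⟨q, hqpath, hqmem, hqe⟩ := myExtract D hD h1
      have hqG : ∀ e ∈ q.edges, e ∈ G.edgeSet := by
        intro e heq
        have hin := Walk.edges_subset_edgeSet q heq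
        rw [edgeSet_sup, edgeSet_fromEdgeSet] at hin
        rcases hin with h1 | ⟨h2a, -⟩
        · exact h1
        · rw [Set.mem_singleton_iff] at h2a
          exact absurd (h2a ▸ heq) hqe
      have hPpath := hqpath.transfer hqG
      have hPham : (q.transfer G hqG).IsHamiltonian := by
        apply hPpath.isHamiltonian_of_mem
        intro w
        rw [Walk.support_transfer]
        exact hqmem w
      exact mySplice huv.symm (fun hvu => h (G.adj_symm hvu))
        (by rw [add_comm]; exact hdeg) (q.transfer G hqG) hPham
    obtain ⟨a, C, hC⟩ := hG' hn1
    by_cases he : s(u, v) ∈ C.edges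
    · have hu : u ∈ C.support := hC.mem_support u
      have hC₂ : (C.rotate u hu).IsHamiltonianCycle := myHamRotate hC hu
      have he₂ : s(u, v) ∈ (C.rotate u hu).edges := (Walk.rotate_edges C u hu).mem_iff.mpr he
      rcases mySndOr huv hC₂.isCycle he₂ with h1 | h1
      · exact key (C.rotate u hu) hC₂ h1 hn1
      · exact key (C.rotate u hu).reverse (myHamReverse hC₂) h1 hn1
    · have hsub : ∀ e ∈ C.edges, e ∈ G.edgeSet := by
        intro e heC
        have hin := Walk.edges_subset_edgeSet C heC
        rw [edgeSet_sup, edgeSet_fromEdgeSet] at hin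
        rcases hin with h1 | ⟨h2a, -⟩
        · exact h1
        · rw [Set.mem_singleton_iff] at h2a
          exact absurd (h2a ▸ heC) he
      refine ⟨a, C.transfer G hsub, ?_⟩
      rw [Walk.isHamiltonianCycle_iff_isCycle_and_support_count_tail_eq_one]
      refine ⟨hC.isCycle.transfer hsub, fun w => ?_⟩
      rw [Walk.support_transfer]
      exact (Walk.isHamiltonianCycle_iff_isCycle_and_support_count_tail_eq_one.mp hC).2 w
end

section
/- Let G be a nonhamiltonian graph of order n ≥ 3. Then the number of Hamilton paths of G equals the number of Hamilton cycles of K_n (on the same vertex set) that contain exactly one edge of the complement Ḡ. -/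
open SimpleGraph

section Aux

variable {V : Type*} [DecidableEq V] {G : SimpleGraph V}

namespace HamAux

lemma mem_support_of_mem_edges' {u v x : V} (p : G.Walk u v) {e : Sym2 V}
    (he : e ∈ p.edges) (hx : x ∈ e) : x ∈ p.support := by
  induction e using Sym2.ind with
  | _ a b =>
    rcases Sym2.mem_iff.1 hx with rfl | rfl
    · exact p.fst_mem_support_of_mem_edges he
    · exact p.snd_mem_support_of_mem_edges he

/-- In a path starting at `u` with `u ≠ v`, there is exactly one edge containing `u`. -/
lemma countP_start {u v : V} (w : G.Walk u v) (hw : w.IsPath) (huv : u ≠ v) :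
    w.edges.countP (fun e => decide (u ∈ e)) = 1 := by
  cases w with
  | nil => exact absurd rfl huv
  | cons h p =>
    rw [SimpleGraph.Walk.cons_isPath_iff] at hw
    rw [SimpleGraph.Walk.edges_cons, List.countP_cons]
    have h0 : p.edges.countP (fun e => decide (u ∈ e)) = 0 := by
      rw [List.countP_eq_zero]
      intro e he
      simp only [decide_eq_true_eq]
      exact fun hx => hw.2 (mem_support_of_mem_edges' p he hx)
    simp [h0, Sym2.mem_mk_left]

lemma countP_end {u v : V} (w : G.Walk u v) (hw : w.IsPath) (huv : u ≠ v) :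
    w.edges.countP (fun e => decide (v ∈ e)) = 1 := by
  have := countP_start w.reverse hw.reverse (Ne.symm huv)
  rwa [SimpleGraph.Walk.edges_reverse, List.countP_reverse] at this

lemma countP_interior {u v : V} (w : G.Walk u v) (hw : w.IsPath) (x : V)
    (hx : x ∈ w.support) (hxu : x ≠ u) (hxv : x ≠ v) :
    w.edges.countP (fun e => decide (x ∈ e)) = 2 := by
  induction w with
  | nil => simp at hx; exact absurd hx hxu
  | @cons u b v h p ih =>
    rw [SimpleGraph.Walk.cons_isPath_iff] at hw
    have hxp : x ∈ p.support := by
      rcases List.mem_cons.1 (SimpleGraph.Walk.support_cons h p ▸ hx : x ∈ u :: p.support) with h' | h'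
      · exact absurd h' hxu
      · exact h'
    rw [SimpleGraph.Walk.edges_cons, List.countP_cons]
    by_cases hxb : x = b
    · subst hxb
      have : p.edges.countP (fun e => decide (x ∈ e)) = 1 := countP_start p hw.1 hxv
      simp [this, Sym2.mem_mk_right]
    · have : p.edges.countP (fun e => decide (x ∈ e)) = 2 := ih hw.1 hxp hxb hxv
      have hnot : ¬ (x ∈ s(u, b)) := by
        simp [Sym2.mem_iff]; exact ⟨hxu, hxb⟩
      simp [this, hnot]

lemma countP_cycle {a : V} (c : G.Walk a a) (hc : c.IsCycle) (x : V) (hx : x ∈ c.support) :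
    c.edges.countP (fun e => decide (x ∈ e)) = 2 := by
  cases c with
  | nil => exact absurd rfl hc.ne_nil
  | @cons a b _ h p =>
    rw [SimpleGraph.Walk.cons_isCycle_iff] at hc
    have hba : b ≠ a := fun hh => G.irrefl (hh ▸ h)
    rw [SimpleGraph.Walk.edges_cons, List.countP_cons]
    by_cases hxa : x = a
    · subst hxa
      have : p.edges.countP (fun e => decide (x ∈ e)) = 1 := countP_end p hc.1 hba
      simp [this, Sym2.mem_mk_left]
    · by_cases hxb : x = b
      · subst hxb
        have : p.edges.countP (fun e => decide (x ∈ e)) = 1 := countP_start p hc.1 hba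
        simp [this, Sym2.mem_mk_right]
      · have hxp : x ∈ p.support := by
          rcases List.mem_cons.1 (SimpleGraph.Walk.support_cons h p ▸ hx : x ∈ a :: p.support) with h' | h'
          · exact absurd h' hxa
          · exact h'
        have : p.edges.countP (fun e => decide (x ∈ e)) = 2 :=
          countP_interior p hc.1 x hxp hxb hxa
        have hnot : ¬ (x ∈ s(a, b)) := by
          simp [Sym2.mem_iff]; exact ⟨hxa, hxb⟩
        simp [this, hnot]

lemma card_filter_toFinset {l : List (Sym2 V)} (hl : l.Nodup) (x : V) :
    (l.toFinset.filter (fun e => x ∈ e)).card = l.countP (fun e => decide (x ∈ e)) := by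
  classical
  have h1 : (l.filter (fun e => decide (x ∈ e))).toFinset
      = l.toFinset.filter (fun e => x ∈ e) := by
    rw [List.toFinset_filter]
    apply Finset.filter_congr
    intro e _
    simp
  rw [← h1, List.toFinset_card_of_nodup (hl.filter _), List.countP_eq_length_filter]

/-- If an edge of a path contains the start vertex, it is the first edge. -/
lemma first_edge {u v : V} (w : G.Walk u v) (hw : w.IsPath) {e : Sym2 V}
    (he : e ∈ w.edges) (hu : u ∈ e) :
    ∃ (b : V) (h : G.Adj u b) (q : G.Walk b v), w = SimpleGraph.Walk.cons h q ∧ e = s(u, b) := by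
  cases w with
  | nil => simp at he
  | @cons u b v h q =>
    rw [SimpleGraph.Walk.cons_isPath_iff] at hw
    rw [SimpleGraph.Walk.edges_cons] at he
    rcases List.mem_cons.1 he with rfl | he'
    · exact ⟨b, h, q, rfl, rfl⟩
    · exact absurd (mem_support_of_mem_edges' q he' hu) hw.2

lemma rotate_hamCycle {a x : V} {c : G.Walk a a} (hc : c.IsHamiltonianCycle)
    (hx : x ∈ c.support) : (c.rotate x hx).IsHamiltonianCycle := by
  have h1 : (c.rotate x hx).IsCycle := hc.isCycle.rotate hx
  refine SimpleGraph.Walk.isHamiltonianCycle_isCycle_and_isHamiltonian_tail.2 ⟨h1, ?_⟩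
  intro z
  rw [SimpleGraph.Walk.support_tail_of_not_nil _ h1.not_nil,
    (SimpleGraph.Walk.support_rotate c x hx).perm.count_eq,
    ← SimpleGraph.Walk.support_tail_of_not_nil _ hc.isCycle.not_nil]
  exact hc.isHamiltonian_tail z

/-- Removing an edge at the basepoint of a hamiltonian cycle. -/
lemma cycle_erase_start {x y : V} (c' : G.Walk x x) (hc' : c'.IsHamiltonianCycle)
    (he' : s(x, y) ∈ c'.edges) :
    ∃ (u v : V) (w : G.Walk u v), w.IsHamiltonian ∧ s(x, y) = s(u, v) ∧
      w.edges.toFinset = c'.edges.toFinset.erase s(x, y) := by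
  classical
  cases c' with
  | nil => exact absurd rfl hc'.ne_nil
  | @cons x b _ h p =>
    have hcyc := hc'.isCycle
    rw [SimpleGraph.Walk.cons_isCycle_iff] at hcyc
    obtain ⟨hp, hfst⟩ := hcyc
    have htail : p.IsHamiltonian := by
      have ht := hc'.isHamiltonian_tail
      rw [SimpleGraph.Walk.tail_cons] at ht
      intro z
      have := ht z
      simpa using this
    have hnodup : ((SimpleGraph.Walk.cons h p).edges).Nodup :=
      hc'.isCycle.isCircuit.isTrail.edges_nodup
    rw [SimpleGraph.Walk.edges_cons] at hnodup
    have he2 : s(x, y) ∈ s(x, b) :: p.edges := by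
      rwa [SimpleGraph.Walk.edges_cons] at he'
    have hpnodup : p.edges.Nodup := hnodup.of_cons
    rcases List.mem_cons.1 he2 with heq | hep
    · -- e is the first edge
      refine ⟨b, x, p, htail, ?_, ?_⟩
      · rw [heq, Sym2.eq_swap]
      · rw [SimpleGraph.Walk.edges_cons, List.toFinset_cons, heq,
          Finset.erase_insert (by simpa using hfst)]
    · -- e lies in p; flip the cycle around
      have hxe : x ∈ s(x, y) := Sym2.mem_mk_left x y
      have hq : p.reverse.IsPath := hp.reverse
      have heq : s(x, y) ∈ p.reverse.edges := by
        rw [SimpleGraph.Walk.edges_reverse, List.mem_reverse]; exact hep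
      obtain ⟨b₂, h₂, q', hq'eq, hxy⟩ := first_edge p.reverse hq heq hxe
      have hpedges : p.edges.reverse = s(x, b₂) :: q'.edges := by
        rw [← SimpleGraph.Walk.edges_reverse, hq'eq, SimpleGraph.Walk.edges_cons]
      have hpsupp : p.support.reverse = x :: q'.support := by
        rw [← SimpleGraph.Walk.support_reverse, hq'eq, SimpleGraph.Walk.support_cons]
      have hqnodup : (s(x, b₂) :: q'.edges).Nodup := by
        rw [← hpedges]; exact List.nodup_reverse.2 hpnodup
      have henotq : s(x, b₂) ∉ q'.edges := (List.nodup_cons.1 hqnodup).1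
      refine ⟨x, b₂, SimpleGraph.Walk.cons h q'.reverse, ?_, hxy, ?_⟩
      · -- hamiltonian
        intro z
        have hcount := htail z
        rw [← List.count_reverse, hpsupp] at hcount
        rw [SimpleGraph.Walk.support_cons, SimpleGraph.Walk.support_reverse]
        rw [List.count_cons] at hcount ⊢
        rw [List.count_reverse]
        exact hcount
      · -- edge sets
        have hpe : p.edges.toFinset = insert s(x, b₂) q'.edges.toFinset := by
          rw [← List.toFinset_reverse, hpedges, List.toFinset_cons]
        have hne : s(x, y) ≠ s(x, b) := fun hh => hfst (hh ▸ hep)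
        rw [SimpleGraph.Walk.edges_cons, SimpleGraph.Walk.edges_cons,
          SimpleGraph.Walk.edges_reverse, List.toFinset_cons, List.toFinset_cons,
          List.toFinset_reverse, hpe, Finset.erase_insert_of_ne hne.symm, hxy,
          Finset.erase_insert]
        rw [List.mem_toFinset]
        rw [← hxy]
        intro hmem
        exact henotq (hxy ▸ hmem)

/-- Removing an edge from a hamiltonian cycle yields a hamiltonian path. -/
lemma cycle_erase {a : V} (c : G.Walk a a) (hc : c.IsHamiltonianCycle) {e : Sym2 V}
    (he : e ∈ c.edges) :
    ∃ (u v : V) (w : G.Walk u v), w.IsHamiltonian ∧ e = s(u, v) ∧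
      w.edges.toFinset = c.edges.toFinset.erase e := by
  classical
  induction e using Sym2.ind with
  | _ x y =>
    have hx : x ∈ c.support := c.fst_mem_support_of_mem_edges he
    have hc' : (c.rotate x hx).IsHamiltonianCycle := rotate_hamCycle hc hx
    have he' : s(x, y) ∈ (c.rotate x hx).edges := (SimpleGraph.Walk.rotate_edges c x hx).mem_iff.2 he
    have hfin : (c.rotate x hx).edges.toFinset = c.edges.toFinset :=
      List.toFinset_eq_of_perm _ _ (SimpleGraph.Walk.rotate_edges c x hx).perm
    obtain ⟨u, v, w, h1, h2, h3⟩ := cycle_erase_start (c.rotate x hx) hc' he'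
    exact ⟨u, v, w, h1, h2, by rw [h3, hfin]⟩


lemma ham_ne [Fintype V] {u v : V} (w : G.Walk u v) (hw : w.IsHamiltonian)
    (hcard : 2 ≤ Fintype.card V) : u ≠ v := by
  rintro rfl
  cases w with
  | nil =>
    have h1 : ∀ z : V, z = u := by
      intro z
      have hz := hw z
      by_contra hzu
      rw [SimpleGraph.Walk.support_nil] at hz
      simp [List.count_cons, hzu] at hz
      exact hzu hz.symm
    have : Fintype.card V ≤ 1 :=
      Fintype.card_le_one_iff.2 fun a b => (h1 a).trans (h1 b).symm
    omega
  | @cons u b _ h p =>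
    have h1 := hw u
    rw [SimpleGraph.Walk.support_cons, List.count_cons_self] at h1
    have h2 : 0 < p.support.count u := List.count_pos_iff.2 p.end_mem_support
    omega

lemma path_to_cycle [Fintype V] {u v : V} (w : G.Walk u v) (hw : w.IsHamiltonian)
    (h : G.Adj v u) (hcard : 3 ≤ Fintype.card V) :
    (SimpleGraph.Walk.cons h w).IsHamiltonianCycle := by
  refine SimpleGraph.Walk.isHamiltonianCycle_isCycle_and_isHamiltonian_tail.2 ⟨?_, ?_⟩
  · rw [SimpleGraph.Walk.cons_isCycle_iff]
    refine ⟨hw.isPath, fun hmem => ?_⟩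
    have hu : u ∈ s(v, u) := Sym2.mem_mk_right v u
    obtain ⟨b, h', q, rfl, heq⟩ := first_edge w hw.isPath hmem hu
    have hbv : b = v := (Sym2.congr_right.1 (Sym2.eq_swap.trans heq)).symm
    subst hbv
    have hq : q.IsPath := ((SimpleGraph.Walk.cons_isPath_iff _ _).1 hw.isPath).1
    have hqnil : q = SimpleGraph.Walk.nil := (SimpleGraph.Walk.isPath_iff_eq_nil (p := q)).1 hq
    subst hqnil
    have hall : ∀ z : V, z = u ∨ z = b := by
      intro z
      have hz := hw.mem_support z
      simpa [SimpleGraph.Walk.support_cons] using hz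
    have hle : Fintype.card V ≤ 2 := by
      have hsub : (Finset.univ : Finset V) ⊆ {u, b} := fun z _ => by
        rcases hall z with rfl | rfl <;> simp
      calc Fintype.card V = (Finset.univ : Finset V).card := rfl
        _ ≤ ({u, b} : Finset V).card := Finset.card_le_card hsub
        _ ≤ 2 := (Finset.card_insert_le _ _).trans (by simp)
    omega
  · rw [SimpleGraph.Walk.tail_cons]
    intro z
    simpa using hw z

end HamAux

end Aux

theorem stmt7 {V : Type*} [Fintype V] [DecidableEq V] {n : ℕ} (hn : 3 ≤ n)
    (hV : Fintype.card V = n) (G : SimpleGraph V) (hG : ¬ G.IsHamiltonian) :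
    (hamPathSets G).ncard =
      {s | s ∈ hamCycleSets (⊤ : SimpleGraph V) ∧
        ((s : Set (Sym2 V)) ∩ Gᶜ.edgeSet).ncard = 1}.ncard := by
  classical
  have hcard3 : 3 ≤ Fintype.card V := by rw [hV]; exact hn
  set S := hamPathSets G with hS
  set T := {s | s ∈ hamCycleSets (⊤ : SimpleGraph V) ∧
      ((s : Set (Sym2 V)) ∩ Gᶜ.edgeSet).ncard = 1} with hT
  set g : Finset (Sym2 V) → Finset (Sym2 V) :=
    fun t => t.filter (fun e => e ∈ G.edgeSet) with hg
  have hGtop : ∀ f : Sym2 V, f ∈ (⊤ : SimpleGraph V).edgeSet → f ∉ G.edgeSet →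
      f ∈ Gᶜ.edgeSet := by
    intro f
    induction f using Sym2.ind with
    | _ a b =>
      intro h1 h2
      rw [SimpleGraph.mem_edgeSet] at h1 h2 ⊢
      rw [SimpleGraph.compl_adj]
      exact ⟨h1.ne, h2⟩
  have hGcomplG : ∀ f : Sym2 V, f ∈ Gᶜ.edgeSet → f ∉ G.edgeSet := by
    intro f
    induction f using Sym2.ind with
    | _ a b =>
      intro h1
      rw [SimpleGraph.mem_edgeSet] at h1 ⊢
      rw [SimpleGraph.compl_adj] at h1
      exact h1.2
  have key : ∀ t ∈ T, ∃ e, ((t : Set (Sym2 V)) ∩ Gᶜ.edgeSet) = {e} ∧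
      t = insert e (g t) ∧ e ∉ g t ∧ g t ∈ S ∧
      ∀ x : V, (t.filter (fun f => x ∈ f)).card = 2 := by
    intro t ht
    obtain ⟨⟨a, c, hc, hct⟩, hone⟩ := ht
    obtain ⟨e, he⟩ := Set.ncard_eq_one.1 hone
    have hein : e ∈ ((t : Set (Sym2 V)) ∩ Gᶜ.edgeSet) := by rw [he]; rfl
    have het : e ∈ t := hein.1
    have hec' : e ∈ Gᶜ.edgeSet := hein.2
    have hsub : ∀ f ∈ t, f ≠ e → f ∈ G.edgeSet := by
      intro f hf hfe
      by_contra hfg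
      have hf2 : f ∈ (⊤ : SimpleGraph V).edgeSet := by
        have : f ∈ c.edges := List.mem_toFinset.1 (hct ▸ hf)
        exact c.edges_subset_edgeSet this
      have : f ∈ ((t : Set (Sym2 V)) ∩ Gᶜ.edgeSet) := ⟨hf, hGtop f hf2 hfg⟩
      rw [he] at this
      exact hfe this
    have hgt : g t = t.erase e := by
      ext f
      simp only [hg, Finset.mem_filter, Finset.mem_erase]
      constructor
      · rintro ⟨hf1, hf2⟩
        exact ⟨fun hfe => hGcomplG e hec' (hfe ▸ hf2), hf1⟩
      · rintro ⟨hfe, hf1⟩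
        exact ⟨hf1, hsub f hf1 hfe⟩
    refine ⟨e, he, ?_, ?_, ?_, ?_⟩
    · rw [hgt, Finset.insert_erase het]
    · rw [hgt]; simp
    · have hec : e ∈ c.edges := List.mem_toFinset.1 (hct ▸ het)
      obtain ⟨u, v, w, hwham, hedge, hwfin⟩ := HamAux.cycle_erase c hc hec
      have hwG : ∀ f ∈ w.edges, f ∈ G.edgeSet := by
        intro f hf
        have hf' : f ∈ t.erase e := by
          rw [← hct] at hgt ⊢
          rw [← hgt]
          rw [hgt, ← hwfin]
          exact List.mem_toFinset.2 hf
        exact hsub f (Finset.mem_of_mem_erase hf') (Finset.ne_of_mem_erase hf')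
      refine ⟨u, v, w.transfer G hwG, ?_, ?_⟩
      · intro z
        rw [SimpleGraph.Walk.support_transfer]
        exact hwham z
      · rw [SimpleGraph.Walk.edges_transfer, hwfin, hct, ← hgt]
    · intro x
      rw [← hct]
      have hnodup := hc.isCycle.isCircuit.isTrail.edges_nodup
      rw [HamAux.card_filter_toFinset hnodup x]
      exact HamAux.countP_cycle c hc.isCycle x (hc.mem_support x)
  have hinj : Set.InjOn g T := by
    intro t1 ht1 t2 ht2 heq
    obtain ⟨e1, he1, ht1e, he1n, hs1, hd1⟩ := key t1 ht1
    obtain ⟨e2, he2, ht2e, he2n, hs2, hd2⟩ := key t2 ht2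
    obtain ⟨u, v, w, hwham, hwfin⟩ := hs1
    have huv : u ≠ v := HamAux.ham_ne w hwham (by omega)
    have hwpath := hwham.isPath
    have hnodupw : w.edges.Nodup := hwpath.isTrail.edges_nodup
    have hcu : ((g t1).filter (fun f => u ∈ f)).card = 1 := by
      rw [← hwfin, HamAux.card_filter_toFinset hnodupw u]
      exact HamAux.countP_start w hwpath huv
    have hcv : ((g t1).filter (fun f => v ∈ f)).card = 1 := by
      rw [← hwfin, HamAux.card_filter_toFinset hnodupw v]
      exact HamAux.countP_end w hwpath huv
    have hmem : ∀ (t : Finset (Sym2 V)) (e : Sym2 V), t = insert e (g t1) →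
        (∀ x : V, (t.filter (fun f => x ∈ f)).card = 2) → u ∈ e ∧ v ∈ e := by
      intro t e hte hdeg
      constructor
      · by_contra hue
        have hd := hdeg u
        rw [hte, Finset.filter_insert, if_neg hue, hcu] at hd
        omega
      · by_contra hve
        have hd := hdeg v
        rw [hte, Finset.filter_insert, if_neg hve, hcv] at hd
        omega
    have hee : ∀ e : Sym2 V, u ∈ e → v ∈ e → e = s(u, v) := by
      intro e
      induction e using Sym2.ind with
      | _ a b =>
        intro hu hv
        rcases Sym2.mem_iff.1 hu with rfl | rfl <;> rcases Sym2.mem_iff.1 hv with rfl | rfl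
        · exact absurd rfl huv
        · rfl
        · exact Sym2.eq_swap
        · exact absurd rfl huv
    have h1 := hmem t1 e1 ht1e hd1
    have h2' := hmem t2 e2 (by rw [ht2e, heq]) hd2
    have hee12 : e1 = e2 := (hee e1 h1.1 h1.2).trans (hee e2 h2'.1 h2'.2).symm
    rw [ht1e, ht2e, heq, hee12]
  have himg : S = g '' T := by
    ext s
    constructor
    · rintro ⟨u, v, w, hw, rfl⟩
      have huv : u ≠ v := HamAux.ham_ne w hw (by omega)
      have hnadj : ¬ G.Adj u v := by
        intro hadj
        exact hG fun _ => ⟨v, SimpleGraph.Walk.cons hadj.symm w,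
          HamAux.path_to_cycle w hw hadj.symm hcard3⟩
      have hwtop : ∀ f ∈ w.edges, f ∈ (⊤ : SimpleGraph V).edgeSet := fun f hf =>
        SimpleGraph.edgeSet_mono le_top (w.edges_subset_edgeSet hf)
      have htadj : (⊤ : SimpleGraph V).Adj v u := by
        rw [SimpleGraph.top_adj]; exact huv.symm
      have hwtham : (w.transfer ⊤ hwtop).IsHamiltonian := by
        intro z
        rw [SimpleGraph.Walk.support_transfer]
        exact hw z
      have hcyc : (SimpleGraph.Walk.cons htadj (w.transfer ⊤ hwtop)).IsHamiltonianCycle :=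
        HamAux.path_to_cycle _ hwtham htadj hcard3
      have hinter : ((↑(insert s(v, u) w.edges.toFinset) : Set (Sym2 V)) ∩ Gᶜ.edgeSet)
          = {s(v, u)} := by
        ext f
        constructor
        · rintro ⟨hf1, hf2⟩
          rcases Finset.mem_insert.1 hf1 with rfl | hf3
          · rfl
          · exact absurd (w.edges_subset_edgeSet (List.mem_toFinset.1 hf3)) (hGcomplG f hf2)
        · rintro rfl
          refine ⟨Finset.mem_insert_self _ _, ?_⟩
          rw [SimpleGraph.mem_edgeSet, SimpleGraph.compl_adj]
          exact ⟨huv.symm, fun h => hnadj h.symm⟩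
      refine ⟨insert s(v, u) w.edges.toFinset,
        ⟨⟨v, SimpleGraph.Walk.cons htadj (w.transfer ⊤ hwtop), hcyc, ?_⟩, ?_⟩, ?_⟩
      · rw [SimpleGraph.Walk.edges_cons, List.toFinset_cons, SimpleGraph.Walk.edges_transfer]
      · rw [hinter, Set.ncard_singleton]
      · ext f
        simp only [hg, Finset.mem_filter, Finset.mem_insert]
        constructor
        · rintro ⟨rfl | hf, hfG⟩
          · exact absurd hfG (by rw [SimpleGraph.mem_edgeSet]; exact fun h => hnadj h.symm)
          · exact hf
        · intro hf
          exact ⟨Or.inr hf, w.edges_subset_edgeSet (List.mem_toFinset.1 hf)⟩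
    · rintro ⟨t, ht, rfl⟩
      obtain ⟨e, -, -, -, hgs, -⟩ := key t ht
      exact hgs
  rw [himg, Set.ncard_image_of_injOn hinj]
end

section
/- Let G be a graph of order n, let 1 ≤ k ≤ n-2, and let C be a Hamilton cycle of K_n containing exactly j ≥ 2 edges of the complement Ḡ. Then the number of paths of length k contained in both G and C is at most n - k - 1. -/
open SimpleGraph

private lemma edges_zip {V : Type*} {G : SimpleGraph V} :
    ∀ {u v : V} (q : G.Walk u v),
      q.edges = List.zipWith (fun a b => s(a, b)) q.support q.support.tail := by
  intro u v q
  induction q with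
  | nil => simp
  | cons h r ih =>
    rw [Walk.edges_cons, ih, Walk.support_cons, List.tail_cons]
    conv_rhs => rw [r.support_eq_cons]
    rw [List.zipWith_cons_cons, ← r.support_eq_cons]

theorem stmt17 {V : Type*} [Fintype V] [DecidableEq V] {n k j : ℕ}
    (hV : Fintype.card V = n) (hk1 : 1 ≤ k) (hk2 : k ≤ n - 2)
    (G : SimpleGraph V) {x : V} (w : (⊤ : SimpleGraph V).Walk x x)
    (hw : w.IsHamiltonianCycle) (hj : 2 ≤ j)
    (hcount : ((w.edges.toFinset : Set (Sym2 V)) ∩ Gᶜ.edgeSet).ncard = j) :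
    {s | s ∈ pathSets G k ∧ s ⊆ w.edges.toFinset}.ncard ≤ n - k - 1 := by
  classical
  have hn3 : 3 ≤ n := by omega
  haveI : NeZero n := ⟨by omega⟩
  set t : List V := w.support.tail with ht
  have hlenw : w.length = n := by rw [hw.length_eq, hV]
  have htlen : t.length = n := by
    have h1 := w.length_support
    have h2 : w.support.length = t.length + 1 := by
      rw [w.support_eq_cons]; simp [ht]
    omega
  have htnodup : t.Nodup := hw.isCycle.support_nodup
  have htmem : ∀ v : V, v ∈ t := by
    intro v
    have hc := ((SimpleGraph.Walk.isHamiltonianCycle_iff_isCycle_and_support_count_tail_eq_one).mp hw).2 v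
    have : 0 < t.count v := by rw [ht, hc]; omega
    exact List.count_pos_iff.mp this
  have hvlt : ∀ i : ZMod n, i.val < t.length := fun i => htlen ▸ i.val_lt
  set g : ZMod n → V := fun i => t.get ⟨i.val, hvlt i⟩ with hg
  have hginj : Function.Injective g := by
    intro a b hab
    have h2 := List.nodup_iff_injective_get.mp htnodup hab
    exact ZMod.val_injective n (congrArg Fin.val h2)
  have hgnat : ∀ (m : ℕ) (h : m < t.length), g ((m : ℕ) : ZMod n) = t[m]'h := by
    intro m h
    have h1 : g ((m : ℕ) : ZMod n) = t.get ⟨m, h⟩ :=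
      congrArg t.get (Fin.ext (ZMod.val_cast_of_lt (by omega)))
    simpa using h1
  have hgsurj : Function.Surjective g := by
    intro v
    obtain ⟨m, hmlt, hm⟩ := List.mem_iff_getElem.mp (htmem v)
    exact ⟨((m : ℕ) : ZMod n), by rw [hgnat m hmlt]; exact hm⟩
  set E : ZMod n → Sym2 V := fun i => s(g i, g (i + 1)) with hE
  have hslen : w.support.length = n + 1 := by rw [w.length_support, hlenw]
  have hxlast : x = t[n-1]'(by omega) := by
    have h0 : w.support.getLast w.support_ne_nil = x := Walk.getLast_support w
    rw [List.getLast_eq_getElem] at h0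
    have h1 : w.support[(n-1)+1]'(by omega) = x :=
      (getElem_congr_idx (show ((n-1)+1 : ℕ) = w.support.length - 1 by omega)).trans h0
    have h2 : w.support[(n-1)+1]'(by omega) = (x :: t)[(n-1)+1]'(by simp [ht]; omega) :=
      getElem_congr_coll (by rw [w.support_eq_cons])
    exact (h1.symm.trans h2).trans (List.getElem_cons_succ x t (n-1) (by simp [ht]; omega))
  have hcastpred : ((0:ℕ) : ZMod n) - 1 = ((n - 1 : ℕ) : ZMod n) := by
    have h4 : ((n - 1 : ℕ) : ZMod n) = (n : ZMod n) - 1 := by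
      push_cast [Nat.cast_sub (show 1 ≤ n by omega)]; ring
    rw [h4, ZMod.natCast_self]; push_cast; ring
  have hedge : ∀ e ∈ w.edges, ∃ i : ZMod n, e = E i := by
    intro e he
    have hzip : w.edges = List.zipWith (fun a b => s(a, b)) (x :: t) t := by
      rw [edges_zip w, w.support_eq_cons]
      rfl
    rw [hzip, List.mem_iff_getElem] at he
    obtain ⟨m, hm, hme⟩ := he
    have hmlt : m < n := by
      rw [List.length_zipWith] at hm
      simp only [List.length_cons, htlen] at hm
      omega
    rw [List.getElem_zipWith] at hme
    refine ⟨((m:ℕ) : ZMod n) - 1, ?_⟩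
    have hE2 : E (((m:ℕ) : ZMod n) - 1) = s(g (((m:ℕ) : ZMod n) - 1), g ((m:ℕ) : ZMod n)) := by
      simp only [hE]
      congr 2
      ring
    have hA : (x :: t)[m]'(by simp only [List.length_cons, htlen]; omega) = g (((m:ℕ) : ZMod n) - 1) := by
      rcases m with _ | m'
      · simp only [List.getElem_cons_zero]
        rw [hcastpred, hgnat (n-1) (by omega)]
        exact hxlast
      · simp only [List.getElem_cons_succ]
        have hc : ((m' + 1 : ℕ) : ZMod n) - 1 = ((m' : ℕ) : ZMod n) := by push_cast; ring
        rw [hc, hgnat m' (by omega)]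
    have hB : t[m]'(by omega) = g ((m:ℕ) : ZMod n) := (hgnat m (by omega)).symm
    rw [hE2, ← hme, hA, hB]
  have hms : ∀ {α : Type _} (L : ℕ) (f : ℕ → α),
      (List.range (L+1)).map f = f 0 :: (List.range L).map (fun m => f (m+1)) := by
    intro α L f
    rw [List.range_succ_eq_map, List.map_cons, List.map_map]
    rfl
  have hdir : ∀ (u v : V) (q : G.Walk u v), q.IsPath → (∀ e ∈ q.edges, e ∈ w.edges) →
      ∀ i : ZMod n, g i = u →
      (q.support = (List.range (q.length + 1)).map (fun m => g (i + (m : ℕ))) ∧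
       q.edges = (List.range q.length).map (fun m => E (i + (m : ℕ)))) ∨
      (q.support = (List.range (q.length + 1)).map (fun m => g (i - (m : ℕ))) ∧
       q.edges = (List.range q.length).map (fun m => E (i - 1 - (m : ℕ)))) := by
    intro u v q
    induction q with
    | nil =>
      intro _ _ i hi
      left
      constructor
      · rw [Walk.support_nil, Walk.length_nil, hms 0 (fun m => g (i + (m : ℕ)))]
        simp [← hi]
      · simp
    | cons hadj r ih =>
      rename_i ua ub uc
      intro hp he i hi
      rw [Walk.cons_isPath_iff] at hp
      obtain ⟨hp', hnm⟩ := hp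
      have he' : ∀ e ∈ r.edges, e ∈ w.edges := fun e hee =>
        he e (by rw [Walk.edges_cons]; exact List.mem_cons_of_mem _ hee)
      have hfirst : s(ua, ub) ∈ w.edges :=
        he _ (by rw [Walk.edges_cons]; exact List.mem_cons_self)
      obtain ⟨i', hi'⟩ := hedge _ hfirst
      simp only [hE] at hi'
      rw [Sym2.eq_iff] at hi'
      rcases hi' with ⟨h1, h2⟩ | ⟨h1, h2⟩
      · -- forward step
        have hii : i' = i := hginj (h1.symm.trans hi.symm)
        rw [hii] at h1 h2
        rcases ih hp' he' (i + 1) h2.symm with ⟨hs, hed⟩ | ⟨hs, hed⟩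
        · left
          constructor
          · rw [Walk.support_cons, hs, Walk.length_cons,
              hms (r.length + 1) (fun m => g (i + (m : ℕ)))]
            congr 1
            · simp [← hi]
            · refine List.map_congr_left fun m _ => ?_
              congr 1
              push_cast
              ring
          · rw [Walk.edges_cons, hed, Walk.length_cons,
              hms r.length (fun m => E (i + (m : ℕ)))]
            congr 1
            · simp only [hE, Nat.cast_zero, add_zero]
              rw [← h1, ← h2]
            · refine List.map_congr_left fun m _ => ?_
              congr 1
              push_cast
              ring
        · rcases Nat.eq_zero_or_pos r.length with h0 | hpos
          · left
            constructor
            · rw [Walk.support_cons, hs, h0, Walk.length_cons, h0]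
              simp only [zero_add, Nat.reduceAdd, List.range_succ, List.range_zero,
                List.range_succ, List.nil_append, List.map_cons, List.map_nil,
                List.cons_append, List.map_append, Nat.cast_zero, Nat.cast_one,
                sub_zero, add_zero]
              rw [← hi, ← h2]
            · rw [Walk.edges_cons, hed, h0, Walk.length_cons, h0]
              simp [List.range_succ, hE]
              tauto
          · exfalso
            apply hnm
            rw [hs]
            refine List.mem_map.mpr ⟨1, List.mem_range.mpr (by omega), ?_⟩
            rw [show (i + 1) - ((1:ℕ) : ZMod n) = i by push_cast; ring]
            exact hi
      · -- backward step
        have hii : i' + 1 = i := hginj (h1.symm.trans hi.symm)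
        have hii' : i' = i - 1 := by rw [← hii]; ring
        rw [hii'] at h1 h2
        rw [hii'] at hii
        rcases ih hp' he' (i - 1) h2.symm with ⟨hs, hed⟩ | ⟨hs, hed⟩
        · rcases Nat.eq_zero_or_pos r.length with h0 | hpos
          · right
            constructor
            · rw [Walk.support_cons, hs, h0, Walk.length_cons, h0]
              simp only [zero_add, List.range_succ, List.range_zero, List.range_succ,
                List.nil_append, List.map_cons, List.map_nil, List.cons_append,
                List.map_append, Nat.cast_zero, Nat.cast_one, sub_zero, add_zero]
              rw [← hi, ← h2]
            · rw [Walk.edges_cons, hed, h0, Walk.length_cons, h0]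
              simp [List.range_succ, hE]
              exact Or.inr ⟨by rw [h1, hii], h2⟩
          · exfalso
            apply hnm
            rw [hs]
            refine List.mem_map.mpr ⟨1, List.mem_range.mpr (by omega), ?_⟩
            rw [show (i - 1) + ((1:ℕ) : ZMod n) = i by push_cast; ring]
            exact hi
        · right
          constructor
          · rw [Walk.support_cons, hs, Walk.length_cons,
              hms (r.length + 1) (fun m => g (i - (m : ℕ)))]
            congr 1
            · simp [← hi]
            · refine List.map_congr_left fun m _ => ?_
              congr 1
              push_cast
              ring
          · rw [Walk.edges_cons, hed, Walk.length_cons,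
              hms r.length (fun m => E (i - 1 - (m : ℕ)))]
            congr 1
            · simp only [hE, Nat.cast_zero, sub_zero]
              rw [hii, ← h2, hi]
              exact Sym2.eq_swap
            · refine List.map_congr_left fun m _ => ?_
              congr 1
              push_cast
              ring
  set W : ZMod n → Finset (Sym2 V) := fun i0 => (Finset.range k).image (fun m => E (i0 + (m : ℕ))) with hWdef
  set GoodF : Finset (ZMod n) :=
    Finset.univ.filter (fun i0 => ∀ m ∈ Finset.range k, E (i0 + (m : ℕ)) ∈ G.edgeSet) with hGoodFdef
  have hsubset : {s | s ∈ pathSets G k ∧ s ⊆ w.edges.toFinset} ⊆ ↑(GoodF.image W) := by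
    intro s hs
    obtain ⟨hps, hssub⟩ := hs
    simp only [pathSets, Set.mem_setOf_eq] at hps
    obtain ⟨u, v, p, hp, hpl, hpe⟩ := hps
    have hpw : ∀ e ∈ p.edges, e ∈ w.edges := by
      intro e hep
      have h1 : e ∈ s := by rw [← hpe]; exact List.mem_toFinset.mpr hep
      exact List.mem_toFinset.mp (hssub h1)
    obtain ⟨i, hgi⟩ := hgsurj u
    have hWmem : ∀ i0 : ZMod n, W i0 = s → s ∈ ↑(GoodF.image W) := by
      intro i0 hW0
      refine Finset.mem_coe.mpr (Finset.mem_image.mpr ⟨i0, ?_, hW0⟩)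
      rw [hGoodFdef]
      refine Finset.mem_filter.mpr ⟨Finset.mem_univ _, fun m hm => ?_⟩
      have h1 : E (i0 + (m : ℕ)) ∈ W i0 := by
        rw [hWdef]
        exact Finset.mem_image.mpr ⟨m, hm, rfl⟩
      rw [hW0, ← hpe] at h1
      exact p.edges_subset_edgeSet (List.mem_toFinset.mp h1)
    rcases hdir u v p hp hpw i hgi with ⟨_, hed⟩ | ⟨_, hed⟩
    · refine hWmem i ?_
      rw [hWdef, ← hpe, hed, hpl]
      ext e
      simp
    · refine hWmem (i - (k : ℕ)) ?_
      rw [hWdef, ← hpe, hed, hpl]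
      have hcast : ∀ m : ℕ, m < k → ((k - 1 - m : ℕ) : ZMod n) = (k : ZMod n) - 1 - (m : ℕ) := by
        intro m hm
        rw [Nat.sub_sub, Nat.cast_sub (by omega)]
        push_cast
        ring
      ext e
      simp only [Finset.mem_image, Finset.mem_range, List.mem_toFinset, List.mem_map,
        List.mem_range]
      constructor
      · rintro ⟨m, hm, rfl⟩
        refine ⟨k - 1 - m, by omega, ?_⟩
        congr 1
        rw [hcast m hm]
        ring
      · rintro ⟨m, hm, rfl⟩
        refine ⟨k - 1 - m, by omega, ?_⟩
        congr 1
        rw [hcast m hm]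
        ring
  have hncard1 : 1 < (((w.edges.toFinset : Set (Sym2 V))) ∩ Gᶜ.edgeSet).ncard := by
    rw [hcount]; omega
  obtain ⟨e1, e2, he1, he2, hne⟩ :=
    (Set.one_lt_ncard_iff (Set.Finite.inter_of_left (w.edges.toFinset.finite_toSet) _)).mp hncard1
  obtain ⟨p1, hp1⟩ := hedge e1 (List.mem_toFinset.mp he1.1)
  obtain ⟨p2, hp2⟩ := hedge e2 (List.mem_toFinset.mp he2.1)
  have hpne : p1 ≠ p2 := fun hh => hne (by rw [hp1, hp2, hh])
  have hnotG : ∀ y : Sym2 V, y ∈ Gᶜ.edgeSet → y ∉ G.edgeSet := by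
    intro y hy
    induction y using Sym2.ind with
    | _ a b =>
      rw [SimpleGraph.mem_edgeSet] at *
      rw [SimpleGraph.compl_adj] at hy
      exact fun hG => hy.2 hG
  set I1 : Finset (ZMod n) := (Finset.range k).image (fun m => p1 - (m : ℕ)) with hI1
  set I2 : Finset (ZMod n) := (Finset.range k).image (fun m => p2 - (m : ℕ)) with hI2
  have hcastinj : ∀ m1 m2 : ℕ, m1 < n → m2 < n → ((m1 : ZMod n) = (m2 : ZMod n)) → m1 = m2 := by
    intro m1 m2 hm1 hm2 hh
    have h3 := congrArg ZMod.val hh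
    rwa [ZMod.val_cast_of_lt hm1, ZMod.val_cast_of_lt hm2] at h3
  have hIcard : ∀ p0 : ZMod n, ((Finset.range k).image (fun m => p0 - (m : ℕ))).card = k := by
    intro p0
    rw [Finset.card_image_of_injOn, Finset.card_range]
    intro m1 hm1 m2 hm2 hh
    rw [Finset.coe_range, Set.mem_Iio] at hm1 hm2
    have h4 : ((m1 : ℕ) : ZMod n) = ((m2 : ℕ) : ZMod n) := by linear_combination -hh
    exact hcastinj m1 m2 (by omega) (by omega) h4
  have hIne : I1 ≠ I2 := by
    intro heq
    have hp2I : p2 ∈ I1 := by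
      rw [heq, hI2]
      exact Finset.mem_image.mpr ⟨0, Finset.mem_range.mpr (by omega), by simp⟩
    rw [hI1] at hp2I
    obtain ⟨m, hm, hmp⟩ := Finset.mem_image.mp hp2I
    rw [Finset.mem_range] at hm
    rcases Nat.eq_zero_or_pos m with h0 | hpos
    · subst h0
      apply hpne
      rw [← hmp]
      simp
    · have hsucc : p2 + 1 ∈ I1 := by
        rw [hI1]
        refine Finset.mem_image.mpr ⟨m - 1, Finset.mem_range.mpr (by omega), ?_⟩
        rw [← hmp, Nat.cast_sub (by omega : 1 ≤ m)]
        push_cast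
        ring
      rw [heq, hI2] at hsucc
      obtain ⟨m', hm', hmp'⟩ := Finset.mem_image.mp hsucc
      rw [Finset.mem_range] at hm'
      have hm'val : ((m' : ℕ) : ZMod n) = ((n - 1 : ℕ) : ZMod n) := by
        rw [← hcastpred]
        have h5 : ((m' : ℕ) : ZMod n) = -1 := by linear_combination -hmp'
        rw [h5]
        push_cast
        ring
      have h6 := hcastinj m' (n-1) (by omega) (by omega) hm'val
      omega
  have hBadcard : k + 1 ≤ (I1 ∪ I2).card := by
    by_contra hcon
    push_neg at hcon
    have hu1 : I1.card = k := hI1 ▸ hIcard p1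
    have hu2 : I2.card = k := hI2 ▸ hIcard p2
    have h1 : I1 = I1 ∪ I2 := Finset.eq_of_subset_of_card_le Finset.subset_union_left (by omega)
    have h2 : I2 = I1 ∪ I2 := Finset.eq_of_subset_of_card_le Finset.subset_union_right (by omega)
    exact hIne (h1.trans h2.symm)
  have hGoodBad : GoodF ⊆ Finset.univ \ (I1 ∪ I2) := by
    intro i0 hi0
    rw [Finset.mem_sdiff]
    refine ⟨Finset.mem_univ _, fun hbad => ?_⟩
    rw [hGoodFdef, Finset.mem_filter] at hi0
    rcases Finset.mem_union.mp hbad with hb | hb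
    · rw [hI1] at hb
      obtain ⟨m, hm, hmp⟩ := Finset.mem_image.mp hb
      have h7 : E (i0 + (m : ℕ)) ∈ G.edgeSet := hi0.2 m hm
      apply hnotG e1 he1.2
      rw [hp1]
      have h4 : i0 + (m : ℕ) = p1 := by rw [← hmp]; ring
      rwa [h4] at h7
    · rw [hI2] at hb
      obtain ⟨m, hm, hmp⟩ := Finset.mem_image.mp hb
      have h7 : E (i0 + (m : ℕ)) ∈ G.edgeSet := hi0.2 m hm
      apply hnotG e2 he2.2
      rw [hp2]
      have h4 : i0 + (m : ℕ) = p2 := by rw [← hmp]; ring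
      rwa [h4] at h7
  have hfin : {s | s ∈ pathSets G k ∧ s ⊆ w.edges.toFinset}.ncard ≤ (GoodF.image W).card := by
    have h5 := Set.ncard_le_ncard hsubset (Finset.finite_toSet _)
    rwa [Set.ncard_coe_finset] at h5
  have hGcard : GoodF.card ≤ n - k - 1 := by
    have h6 : GoodF.card ≤ (Finset.univ \ (I1 ∪ I2)).card := Finset.card_le_card hGoodBad
    rw [Finset.card_sdiff_of_subset (Finset.subset_univ _)] at h6
    have h7 : (Finset.univ : Finset (ZMod n)).card = n := by
      rw [Finset.card_univ, ZMod.card]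
    omega
  calc {s | s ∈ pathSets G k ∧ s ⊆ w.edges.toFinset}.ncard
      ≤ (GoodF.image W).card := hfin
    _ ≤ GoodF.card := Finset.card_image_le
    _ ≤ n - k - 1 := hGcard
end

section
/- Let n and k be integers with n ≥ 6 and 1 ≤ k ≤ n - 1. Then the graph K_{n-1}·K_2 contains exactly P(n-2, k-1)·[(n-1)(n-1-k)/2 + 1] paths of length k, where P(a, b) = a(a-1)⋯(a-b+1) is the falling factorial (with P(a,0) = 1). -/
open SimpleGraph

set_option linter.unusedSectionVars false
variable {V : Type*} [DecidableEq V] {G : SimpleGraph V}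

def lEdges : List V → List (Sym2 V)
  | [] => []
  | [_] => []
  | a :: b :: L => s(a, b) :: lEdges (b :: L)

@[simp] lemma lEdges_nil : lEdges ([] : List V) = [] := rfl
@[simp] lemma lEdges_single (a : V) : lEdges [a] = [] := rfl
@[simp] lemma lEdges_cons_cons (a b : V) (L : List V) :
    lEdges (a :: b :: L) = s(a, b) :: lEdges (b :: L) := rfl

lemma mem_of_mem_lEdges {L : List V} {e : Sym2 V} (he : e ∈ lEdges L) {x : V}
    (hx : x ∈ e) : x ∈ L := by
  induction L with
  | nil => simp at he
  | cons a L ih =>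
    match L, he, ih with
    | b :: L, he, ih =>
      rcases List.mem_cons.mp he with h | h
      · subst h
        rcases Sym2.mem_iff.mp hx with h | h <;> simp [h]
      · exact List.mem_cons_of_mem _ (ih h)

lemma not_mem_of_not_mem_lEdges {L : List V} {e : Sym2 V} (he : e ∈ lEdges L) {x : V}
    (hx : x ∉ L) : x ∉ e := fun h => hx (mem_of_mem_lEdges he h)

lemma lEdges_walk {u v : V} (w : G.Walk u v) : w.edges = lEdges w.support := by
  induction w with
  | nil => simp
  | cons h p ih => cases p <;> simp_all

lemma lEdges_append_single (M : List V) (hM : M ≠ []) (a : V) :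
    lEdges (M ++ [a]) = lEdges M ++ [s(M.getLast hM, a)] := by
  induction M with
  | nil => simp at hM
  | cons x M ih =>
    match M, ih with
    | [], _ => rfl
    | y :: M, ih =>
      simp only [List.cons_append, lEdges_cons_cons]
      rw [show y :: (M ++ [a]) = (y :: M) ++ [a] from rfl, ih (by simp)]
      simp [List.getLast_cons]

lemma lEdges_reverse (L : List V) : lEdges L.reverse = (lEdges L).reverse := by
  induction L with
  | nil => rfl
  | cons a L ih =>
    match L, ih with
    | [], _ => rfl
    | b :: L, ih =>
      rw [List.reverse_cons, lEdges_append_single _ (by simp), ih]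
      simp [Sym2.eq_swap]

/-- Build a walk from a nonempty chain of adjacent vertices. -/
def walkOfChain (G : SimpleGraph V) :
    (L : List V) → L.Chain' G.Adj → (hne : L ≠ []) → G.Walk (L.head hne) (L.getLast hne)
  | [_], _, _ => Walk.nil
  | a :: b :: L, h, _ =>
    (Walk.cons ((List.isChain_cons_cons.mp h).1)
      (walkOfChain G (b :: L) (show (b :: L).Chain' G.Adj from (List.isChain_cons_cons.mp h).2) (by simp))).copy rfl
      (by simp [List.getLast_cons])

lemma support_walkOfChain (G : SimpleGraph V) :
    ∀ (L : List V) (h : L.Chain' G.Adj) (hne : L ≠ []),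
      (walkOfChain G L h hne).support = L
  | [_], _, _ => rfl
  | a :: b :: L, h, _ => by
    rw [walkOfChain]
    exact (Walk.support_copy _ _ _).trans (congrArg (a :: ·) (support_walkOfChain G (b :: L) _ _))

lemma lEdges_nodup {L : List V} (hL : L.Nodup) : (lEdges L).Nodup := by
  induction L with
  | nil => simp
  | cons a L ih =>
    match L, hL, ih with
    | [], _, _ => simp
    | b :: L, hL, ih =>
      rw [lEdges_cons_cons, List.nodup_cons]
      refine ⟨fun hmem => ?_, ih (List.nodup_cons.mp hL).2⟩
      exact not_mem_of_not_mem_lEdges hmem (List.nodup_cons.mp hL).1 (by simp)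

/-- In a list with head `a` where `a` occurs only at the head, every edge containing `a`
is the first edge. -/
lemma eq_head_edge_of_mem {a : V} {L : List V} (ha : a ∉ L) {e : Sym2 V}
    (he : e ∈ lEdges (a :: L)) (hae : a ∈ e) : ∃ b L', L = b :: L' ∧ e = s(a, b) := by
  match L, he with
  | b :: L', he =>
    refine ⟨b, L', rfl, ?_⟩
    rcases List.mem_cons.mp he with h | h
    · exact h
    · exact absurd (mem_of_mem_lEdges h hae) ha

/-- An interior vertex of a nodup list lies on two distinct edges. -/
lemma interior_two_edges {a : V} {M : List V} (hM : M.Nodup) (haM : a ∈ M)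
    (hne : M ≠ []) (hhead : a ≠ M.head hne) (hlast : a ≠ M.getLast hne) :
    ∃ e₁ ∈ lEdges M, ∃ e₂ ∈ lEdges M, e₁ ≠ e₂ ∧ a ∈ e₁ ∧ a ∈ e₂ := by
  induction M with
  | nil => simp at haM
  | cons m M ih =>
    have ham : a ≠ m := by simpa using hhead
    have haM' : a ∈ M := (List.mem_cons.mp haM).resolve_left ham
    have hMne : M ≠ [] := by rintro rfl; simp at haM'
    match M, haM', hMne with
    | b :: M', haM', _ =>
      by_cases hab : a = b
      · subst hab
        -- a is the second vertex; M' nonempty since a ≠ last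
        have hM'ne : M' ≠ [] := by
          rintro rfl
          exact hlast (by simp [List.getLast_cons])
        match M' with
        | c :: M'' =>
          refine ⟨s(m, a), by simp, s(a, c), by simp, ?_, by simp, by simp⟩
          intro h
          have : m = c := by
            rcases Sym2.eq_iff.mp h with ⟨h1, h2⟩ | ⟨h1, h2⟩
            · exact absurd h1.symm ham
            · exact h1
          subst this
          exact (List.nodup_cons.mp hM).1 (by simp)
      · have hti : a ≠ (b :: M').head (by simp) := hab
        have htl : a ≠ (b :: M').getLast (by simp) := by
          simpa [List.getLast_cons] using hlast
        obtain ⟨e₁, he₁, e₂, he₂, hne', h1, h2⟩ :=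
          ih (List.nodup_cons.mp hM).2 haM' (by simp) hti htl
        exact ⟨e₁, by simp [he₁], e₂, by simp [he₂], hne', h1, h2⟩

lemma lEdges_eq_of_head_eq : ∀ {L M : List V}, L.Nodup → M.Nodup →
    L.length = M.length → ∀ (hne : L ≠ []) (hne' : M ≠ []), L.head hne = M.head hne' →
    (lEdges L).toFinset = (lEdges M).toFinset → M = L
  | [a], [m], _, _, _, _, _, hhead, _ => by simpa using hhead.symm
  | [a], [], _, _, hlen, _, _, _, _ => by simp at hlen
  | [a], m :: m' :: M', _, _, hlen, _, _, _, _ => by simp at hlen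
  | a :: b :: T, M, hL, hM, hlen, hne, hne', hhead, he => by
    match M, hlen with
    | m :: m' :: M', hlen =>
      have hm : m = a := by simpa using hhead.symm
      subst hm
      have haT : m ∉ b :: T := (List.nodup_cons.mp hL).1
      have haM : m ∉ m' :: M' := (List.nodup_cons.mp hM).1
      have hmem : s(m, m') ∈ (lEdges (m :: b :: T)).toFinset := by
        rw [he]; simp
      obtain ⟨b', L'', hbL, hedge⟩ :=
        eq_head_edge_of_mem haT (List.mem_toFinset.mp hmem) (by simp)
      obtain ⟨rfl, rfl⟩ : b = b' ∧ T = L'' := by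
        constructor <;> injection hbL
      have hm' : m' = b := by
        rcases Sym2.eq_iff.mp hedge with ⟨_, h2⟩ | ⟨h1, _⟩
        · exact h2
        · exact absurd h1.symm (fun h => haT (h ▸ List.mem_cons_self))
      subst hm'
      have hstrip : (lEdges (m' :: T)).toFinset = (lEdges (m' :: M')).toFinset := by
        have h1 : s(m, m') ∉ (lEdges (m' :: T)).toFinset := fun h =>
          not_mem_of_not_mem_lEdges (List.mem_toFinset.mp h) haT (by simp)
        have h2 : s(m, m') ∉ (lEdges (m' :: M')).toFinset := fun h =>
          not_mem_of_not_mem_lEdges (List.mem_toFinset.mp h) haM (by simp)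
        have hee := he
        simp only [lEdges_cons_cons, List.toFinset_cons] at hee
        rw [← Finset.erase_insert h1, ← Finset.erase_insert h2, hee]
      have htail : m' :: M' = m' :: T :=
        lEdges_eq_of_head_eq (List.nodup_cons.mp hL).2 (List.nodup_cons.mp hM).2
          (by simpa using hlen) (by simp) (by simp) rfl hstrip
      rw [htail]
  | [], M, _, _, _, hne, _, _, _ => absurd rfl hne

lemma lEdges_eq_or_reverse {L M : List V} (hL : L.Nodup) (hM : M.Nodup)
    (hlen : L.length = M.length) (h2 : 2 ≤ L.length)
    (he : (lEdges L).toFinset = (lEdges M).toFinset) : M = L ∨ M = L.reverse := by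
  match L, h2 with
  | a :: b :: T, _ =>
    have hMne : M ≠ [] := by rintro rfl; simp at hlen
    have hLne : (a :: b :: T : List V) ≠ [] := by simp
    have hmem : s(a, b) ∈ (lEdges M).toFinset := by rw [← he]; simp
    have haM : a ∈ M := mem_of_mem_lEdges (List.mem_toFinset.mp hmem) (by simp)
    have haT : a ∉ b :: T := (List.nodup_cons.mp hL).1
    by_cases hhead : a = M.head hMne
    · left
      exact lEdges_eq_of_head_eq hL hM hlen hLne hMne hhead he
    · by_cases hlast : a = M.getLast hMne
      · right
        have h1 : M.reverse.head (by simpa using hMne) = a := by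
          rw [List.head_reverse]; exact hlast.symm
        have := lEdges_eq_of_head_eq hL (List.nodup_reverse.mpr hM) (by simpa using hlen)
          hLne (by simpa using hMne) (by simp [h1]) (by
            rw [lEdges_reverse]
            simpa using he)
        rw [← this, List.reverse_reverse]
      · exfalso
        obtain ⟨e₁, he₁, e₂, he₂, hne12, ha1, ha2⟩ :=
          interior_two_edges hM haM hMne hhead hlast
        have h1 : e₁ ∈ lEdges (a :: b :: T) := by
          have : e₁ ∈ (lEdges (a :: b :: T)).toFinset := by rw [he]; exact List.mem_toFinset.mpr he₁
          exact List.mem_toFinset.mp this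
        have h2' : e₂ ∈ lEdges (a :: b :: T) := by
          have : e₂ ∈ (lEdges (a :: b :: T)).toFinset := by rw [he]; exact List.mem_toFinset.mpr he₂
          exact List.mem_toFinset.mp this
        obtain ⟨b1, L1, hb1, he1'⟩ := eq_head_edge_of_mem haT h1 ha1
        obtain ⟨b2, L2, hb2, he2'⟩ := eq_head_edge_of_mem haT h2' ha2
        rw [hb1] at hb2
        obtain ⟨rfl, rfl⟩ : b1 = b2 ∧ L1 = L2 := by constructor <;> injection hb2
        exact hne12 (he1'.trans he2'.symm)

/-- The finset of duplicate-free lists of length `m` with entries in `t`. -/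
def listsF : ℕ → Finset V → Finset (List V)
  | 0, _ => {[]}
  | m + 1, t => t.biUnion fun a => (listsF m (t.erase a)).image (a :: ·)

lemma mem_listsF : ∀ (m : ℕ) (t : Finset V) (L : List V),
    L ∈ listsF m t ↔ L.Nodup ∧ L.length = m ∧ ∀ x ∈ L, x ∈ t
  | 0, t, L => by
    constructor
    · intro h
      simp only [listsF, Finset.mem_singleton] at h
      subst h; simp
    · rintro ⟨_, hlen, _⟩
      rw [List.length_eq_zero_iff] at hlen
      subst hlen; simp [listsF]
  | m + 1, t, L => by
    simp only [listsF, Finset.mem_biUnion, Finset.mem_image]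
    constructor
    · rintro ⟨a, ha, L', hL', rfl⟩
      obtain ⟨h1, h2, h3⟩ := (mem_listsF m _ L').mp hL'
      refine ⟨?_, by simp [h2], ?_⟩
      · exact List.nodup_cons.mpr ⟨fun h => (Finset.mem_erase.mp (h3 _ h)).1 rfl, h1⟩
      · intro x hx
        rcases List.mem_cons.mp hx with rfl | hx
        · exact ha
        · exact Finset.mem_of_mem_erase (h3 _ hx)
    · rintro ⟨hnd, hlen, hmem⟩
      match L, hlen with
      | a :: L', hlen =>
        refine ⟨a, hmem _ (by simp), L', (mem_listsF m _ L').mpr ⟨(List.nodup_cons.mp hnd).2,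
          by simpa using hlen, fun x hx => Finset.mem_erase.mpr
            ⟨fun h => (List.nodup_cons.mp hnd).1 (h ▸ hx), hmem _ (by simp [hx])⟩⟩, rfl⟩

lemma card_listsF : ∀ (m : ℕ) (t : Finset V), (listsF m t).card = t.card.descFactorial m
  | 0, t => by simp [listsF]
  | m + 1, t => by
    have hdisj : ∀ a ∈ t, ∀ b ∈ t, a ≠ b →
        Disjoint ((listsF m (t.erase a)).image (a :: ·)) ((listsF m (t.erase b)).image (b :: ·)) := by
      intro a _ b _ hab
      simp only [Finset.disjoint_left, Finset.mem_image]
      rintro s ⟨L1, _, rfl⟩ ⟨L2, _, h⟩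
      simp only [List.cons_eq_cons] at h
      exact hab h.1.symm
    rw [listsF, Finset.card_biUnion hdisj]
    have hterm : ∀ a ∈ t, ((listsF m (t.erase a)).image (a :: ·)).card =
        (t.card - 1).descFactorial m := by
      intro a ha
      rw [Finset.card_image_of_injective _ (fun x y h => by injection h),
        card_listsF m, Finset.card_erase_of_mem ha]
    rw [Finset.sum_congr rfl hterm, Finset.sum_const, smul_eq_mul]
    cases hc : t.card with
    | zero => simp
    | succ c => rw [Nat.succ_descFactorial_succ]; simp

lemma chain'_of_nodup_of_adj {L : List V} (hL : L.Nodup)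
    (h : ∀ x ∈ L, ∀ y ∈ L, x ≠ y → G.Adj x y) : L.Chain' G.Adj := by
  have : L.Pairwise G.Adj := by
    induction L with
    | nil => simp
    | cons a L ih =>
      rw [List.pairwise_cons]
      refine ⟨fun b hb => h a (by simp) b (by simp [hb])
        (fun hab => (List.nodup_cons.mp hL).1 (hab ▸ hb)), ?_⟩
      exact ih (List.nodup_cons.mp hL).2 (fun x hx y hy => h x (by simp [hx]) y (by simp [hy]))
  exact this.isChain

lemma lEdges_mem_edgeSet {L : List V} (hc : L.Chain' G.Adj) {e : Sym2 V}
    (he : e ∈ lEdges L) : e ∈ G.edgeSet := by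
  induction L with
  | nil => simp at he
  | cons a L ih =>
    match L, he with
    | b :: L, he =>
      rcases List.mem_cons.mp he with rfl | h
      · exact (List.isChain_cons_cons.mp hc).1
      · exact ih (List.isChain_cons_cons.mp hc).2 h

lemma exists_adj_of_mem_edge {e : Sym2 V} {v : V} (hv : v ∈ e) (he : e ∈ G.edgeSet) :
    ∃ w, e = s(v, w) ∧ G.Adj v w := by
  induction e with
  | _ x y =>
    rcases Sym2.mem_iff.mp hv with rfl | rfl
    · exact ⟨y, rfl, he⟩
    · exact ⟨x, Sym2.eq_swap, (G.mem_edgeSet.mp he).symm⟩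

section KKfacts

def vv (n : ℕ) (hn : 6 ≤ n) : Fin n := ⟨n - 1, by omega⟩
def zz (n : ℕ) (hn : 6 ≤ n) : Fin n := ⟨0, by omega⟩

variable {n : ℕ} (hn : 6 ≤ n)

lemma KK_adj_iff (i j : Fin n) : (KK n).Adj i j ↔
    i ≠ j ∧ ((i.1 < n - 1 ∧ j.1 < n - 1) ∨ i.1 = 0 ∨ j.1 = 0) := by
  simp only [KK, SimpleGraph.fromRel_adj]
  tauto

lemma KK_adj_clique {i j : Fin n} (hi : i.1 < n - 1) (hj : j.1 < n - 1) (hij : i ≠ j) :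
    (KK n).Adj i j := (KK_adj_iff i j).mpr ⟨hij, Or.inl ⟨hi, hj⟩⟩

lemma KK_adj_vv {j : Fin n} (h : (KK n).Adj (vv n hn) j) : j = zz n hn := by
  rw [KK_adj_iff] at h
  obtain ⟨hne, h⟩ := h
  have : j.1 = 0 := by
    rcases h with ⟨h1, _⟩ | h1 | h1
    · exact absurd h1 (by simp only [vv]; omega)
    · exact absurd h1 (by simp only [vv]; omega)
    · exact h1
  exact Fin.ext this

lemma KK_adj_vv_zz : (KK n).Adj (vv n hn) (zz n hn) := by
  rw [KK_adj_iff]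
  refine ⟨?_, Or.inr (Or.inr rfl)⟩
  simp only [vv, zz, ne_eq, Fin.mk.injEq]
  omega

lemma ne_vv_iff {i : Fin n} : i ≠ vv n hn ↔ i.1 < n - 1 := by
  constructor
  · intro h
    rcases Nat.lt_or_ge i.1 (n - 1) with h1 | h1
    · exact h1
    · exact absurd (Fin.ext (by omega : i.1 = n - 1)) h
  · intro h1 h
    subst h
    simp only [vv] at h1
    omega

end KKfacts

section Count

variable {n k : ℕ} (hn : 6 ≤ n)

def AF (n : ℕ) (hn : 6 ≤ n) : Finset (Fin n) := Finset.univ.erase (vv n hn)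
def BF (n : ℕ) (hn : 6 ≤ n) : Finset (Fin n) := (AF n hn).erase (zz n hn)

lemma mem_AF {i : Fin n} : i ∈ AF n hn ↔ i.1 < n - 1 := by
  rw [AF, Finset.mem_erase, ← ne_vv_iff hn]
  simp

lemma mem_BF {i : Fin n} : i ∈ BF n hn ↔ i ≠ zz n hn ∧ i.1 < n - 1 := by
  rw [BF, Finset.mem_erase, mem_AF hn]

lemma card_AF : (AF n hn).card = n - 1 := by
  rw [AF, Finset.card_erase_of_mem (Finset.mem_univ _)]
  simp

lemma card_BF : (BF n hn).card = n - 2 := by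
  rw [BF, Finset.card_erase_of_mem, card_AF hn]
  · omega
  · rw [mem_AF hn]
    simp only [zz]
    omega

def SF (n k : ℕ) (hn : 6 ≤ n) : Finset (List (Fin n)) :=
  listsF (k + 1) (AF n hn) ∪
    (listsF (k - 1) (BF n hn)).image (fun L => vv n hn :: zz n hn :: L) ∪
    (listsF (k - 1) (BF n hn)).image (fun L => (vv n hn :: zz n hn :: L).reverse)

lemma vv_ne_zz : vv n hn ≠ zz n hn := by
  simp only [vv, zz, ne_eq, Fin.mk.injEq]
  omega

/-- the middle/right parts of SF are genuine nodup chains -/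
lemma cons_props {M : List (Fin n)} (hM : M ∈ listsF (k - 1) (BF n hn)) (hk1 : 1 ≤ k) :
    (vv n hn :: zz n hn :: M).Nodup ∧ (vv n hn :: zz n hn :: M).length = k + 1 ∧
      (vv n hn :: zz n hn :: M).Chain' (KK n).Adj := by
  obtain ⟨hnd, hlen, hmem⟩ := (mem_listsF _ _ _).mp hM
  have hMv : ∀ x ∈ M, x ≠ vv n hn := fun x hx =>
    (ne_vv_iff hn).mpr ((mem_BF hn).mp (hmem x hx)).2
  have hMz : ∀ x ∈ M, x ≠ zz n hn := fun x hx => ((mem_BF hn).mp (hmem x hx)).1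
  refine ⟨?_, by simp [hlen]; omega, ?_⟩
  · simp only [List.nodup_cons]
    refine ⟨?_, fun h => hMz _ h rfl, hnd⟩
    simp only [List.mem_cons, not_or]
    exact ⟨vv_ne_zz hn, fun h => hMv _ h rfl⟩
  · show List.IsChain _ _
    rw [List.isChain_cons_cons]
    refine ⟨KK_adj_vv_zz hn, ?_⟩
    refine chain'_of_nodup_of_adj (by simp only [List.nodup_cons]; exact ⟨fun h => hMz _ h rfl, hnd⟩) ?_
    intro x hx y hy hxy
    refine KK_adj_clique ?_ ?_ hxy
    · rcases List.mem_cons.mp hx with rfl | hx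
      · simp only [zz]; omega
      · exact ((mem_BF hn).mp (hmem x hx)).2
    · rcases List.mem_cons.mp hy with rfl | hy
      · simp only [zz]; omega
      · exact ((mem_BF hn).mp (hmem y hy)).2

lemma head_vv_form {L : List (Fin n)} (hk1 : 1 ≤ k) (hL : L.Nodup)
    (hc : L.Chain' (KK n).Adj) (hlen : L.length = k + 1)
    (hhead : L.head? = some (vv n hn)) :
    ∃ M ∈ listsF (k - 1) (BF n hn), L = vv n hn :: zz n hn :: M := by
  match L, hhead with
  | a :: L₂, hhead =>
    have ha : a = vv n hn := by simpa using hhead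
    subst ha
    match L₂, hlen with
    | [], hlen => simp at hlen; omega
    | w :: M, hlen =>
      have hw : w = zz n hn := KK_adj_vv hn (List.isChain_cons_cons.mp hc).1
      subst hw
      refine ⟨M, (mem_listsF _ _ _).mpr ⟨?_, ?_, ?_⟩, rfl⟩
      · exact ((List.nodup_cons.mp hL).2 |> List.nodup_cons.mp).2
      · simp at hlen; omega
      · intro x hx
        rw [mem_BF hn]
        refine ⟨fun h => ((List.nodup_cons.mp hL).2 |> List.nodup_cons.mp).1 (h ▸ hx), ?_⟩
        refine (ne_vv_iff hn).mp (fun h => (List.nodup_cons.mp hL).1 ?_)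
        rw [← h]
        simp [hx]

lemma chain'_rev {L : List (Fin n)} (hc : L.Chain' (KK n).Adj) :
    L.reverse.Chain' (KK n).Adj :=
  List.isChain_reverse.mpr (hc.imp fun _ _ h => h.symm)

lemma mem_SF (hk1 : 1 ≤ k) {L : List (Fin n)} :
    L ∈ SF n k hn ↔ L.Nodup ∧ L.length = k + 1 ∧ L.Chain' (KK n).Adj := by
  constructor
  · intro h
    rcases Finset.mem_union.mp h with h | h
    · rcases Finset.mem_union.mp h with h | h
      · obtain ⟨hnd, hlen, hmem⟩ := (mem_listsF _ _ _).mp h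
        refine ⟨hnd, hlen, chain'_of_nodup_of_adj hnd ?_⟩
        intro x hx y hy hxy
        exact KK_adj_clique ((mem_AF hn).mp (hmem x hx)) ((mem_AF hn).mp (hmem y hy)) hxy
      · obtain ⟨M, hM, rfl⟩ := Finset.mem_image.mp h
        exact cons_props hn hM hk1
    · obtain ⟨M, hM, rfl⟩ := Finset.mem_image.mp h
      obtain ⟨h1, h2, h3⟩ := cons_props hn hM hk1
      exact ⟨List.nodup_reverse.mpr h1, by simpa using h2, chain'_rev h3⟩
  · rintro ⟨hnd, hlen, hc⟩
    by_cases hv : vv n hn ∈ L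
    · have hLne : L ≠ [] := by rintro rfl; simp at hv
      have hor : L.head? = some (vv n hn) ∨ L.getLast? = some (vv n hn) := by
        by_contra hcon
        push_neg at hcon
        obtain ⟨hh, hl⟩ := hcon
        obtain ⟨e₁, he₁, e₂, he₂, hne12, ha1, ha2⟩ := interior_two_edges hnd hv hLne
          (fun h => hh (by rw [h, List.head?_eq_head]))
          (fun h => hl (by rw [h, List.getLast?_eq_getLast]))
        obtain ⟨w₁, hw1, hadj1⟩ := exists_adj_of_mem_edge ha1 (lEdges_mem_edgeSet hc he₁)
        obtain ⟨w₂, hw2, hadj2⟩ := exists_adj_of_mem_edge ha2 (lEdges_mem_edgeSet hc he₂)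
        rw [KK_adj_vv hn hadj1] at hw1
        rw [KK_adj_vv hn hadj2] at hw2
        exact hne12 (hw1.trans hw2.symm)
      rcases hor with hh | hl
      · obtain ⟨M, hM, rfl⟩ := head_vv_form hn hk1 hnd hc hlen hh
        exact Finset.mem_union.mpr (Or.inl (Finset.mem_union.mpr (Or.inr
          (Finset.mem_image.mpr ⟨M, hM, rfl⟩))))
      · obtain ⟨M, hM, hrev⟩ := head_vv_form hn hk1 (List.nodup_reverse.mpr hnd)
          (chain'_rev hc) (by simpa using hlen) (by rw [List.head?_reverse]; exact hl)
        refine Finset.mem_union.mpr (Or.inr (Finset.mem_image.mpr ⟨M, hM, ?_⟩))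
        rw [← hrev, List.reverse_reverse]
    · refine Finset.mem_union.mpr (Or.inl (Finset.mem_union.mpr (Or.inl
        ((mem_listsF _ _ _).mpr ⟨hnd, hlen, fun x hx => ?_⟩))))
      exact (mem_AF hn).mpr ((ne_vv_iff hn).mp (fun h => hv (h ▸ hx)))

lemma card_SF (hk1 : 1 ≤ k) :
    (SF n k hn).card = (n - 1).descFactorial (k + 1) + 2 * (n - 2).descFactorial (k - 1) := by
  have hvA : ∀ L ∈ listsF (k + 1) (AF n hn), vv n hn ∉ L := by
    intro L hL hv
    have := ((mem_listsF _ _ _).mp hL).2.2 _ hv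
    rw [mem_AF hn] at this
    simp only [vv] at this
    omega
  have hd2 : Disjoint ((listsF (k - 1) (BF n hn)).image (fun L => vv n hn :: zz n hn :: L))
      ((listsF (k - 1) (BF n hn)).image (fun L => (vv n hn :: zz n hn :: L).reverse)) := by
    simp only [Finset.disjoint_left, Finset.mem_image]
    rintro s ⟨L1, hL1, rfl⟩ ⟨L2, hL2, h⟩
    have h1 : (vv n hn :: zz n hn :: L1).head? = some (vv n hn) := rfl
    rw [← h, List.head?_reverse] at h1
    have : (zz n hn :: L2).getLast (by simp) ∈ zz n hn :: L2 := List.getLast_mem _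
    rw [List.getLast?_eq_getLast (by simp), List.getLast_cons (by simp)] at h1
    have h2 := List.getLast_mem (show (zz n hn :: L2) ≠ [] by simp)
    rw [Option.some_inj] at h1
    rcases List.mem_cons.mp (h1 ▸ h2) with hc | hc
    · exact vv_ne_zz hn hc
    · have := ((mem_listsF _ _ _).mp hL2).2.2 _ hc
      rw [mem_BF hn] at this
      have := (ne_vv_iff hn).mpr this.2
      exact this rfl
  have hd1 : Disjoint (listsF (k + 1) (AF n hn))
      ((listsF (k - 1) (BF n hn)).image (fun L => vv n hn :: zz n hn :: L) ∪
        (listsF (k - 1) (BF n hn)).image (fun L => (vv n hn :: zz n hn :: L).reverse)) := by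
    simp only [Finset.disjoint_left, Finset.mem_union, Finset.mem_image]
    rintro s hs (⟨L1, _, rfl⟩ | ⟨L1, _, rfl⟩)
    · exact hvA _ hs (by simp)
    · exact hvA _ hs (by simp)
  have hinj1 : Set.InjOn (fun L => vv n hn :: zz n hn :: L) (listsF (k - 1) (BF n hn)) := by
    intro x _ y _ h
    simpa using h
  have hinj2 : Set.InjOn (fun L => (vv n hn :: zz n hn :: L).reverse)
      (listsF (k - 1) (BF n hn)) := by
    intro x _ y _ h
    simp only [List.reverse_inj] at h
    simpa using h
  rw [SF, Finset.union_assoc, Finset.card_union_of_disjoint hd1,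
    Finset.card_union_of_disjoint hd2, Finset.card_image_of_injOn hinj1,
    Finset.card_image_of_injOn hinj2, card_listsF, card_listsF, card_AF hn, card_BF hn]
  ring

end Count

lemma reverse_ne_self {V : Type*} {L : List V} (hL : L.Nodup) (h2 : 2 ≤ L.length) :
    L.reverse ≠ L := by
  match L, h2 with
  | a :: b :: T, _ =>
    intro h
    have h1 : (a :: b :: T).reverse.head? = some a := by rw [h]; rfl
    rw [List.head?_reverse, List.getLast?_eq_getLast (by simp),
      List.getLast_cons (by simp), Option.some_inj] at h1
    have h2 := List.getLast_mem (show (b :: T) ≠ [] by simp)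
    rw [h1] at h2
    exact (List.nodup_cons.mp hL).1 h2


theorem stmt18 {n k : ℕ} (hn : 6 ≤ n) (hk1 : 1 ≤ k) (hk2 : k ≤ n - 1) :
    2 * (pathSets (KK n) k).ncard =
      Nat.descFactorial (n - 2) (k - 1) * ((n - 1) * (n - 1 - k) + 2) := by
  classical
  set f : List (Fin n) → Finset (Sym2 (Fin n)) := fun L => (lEdges L).toFinset with hf
  set F : Finset (Finset (Sym2 (Fin n))) := (SF n k hn).image f with hF
  -- step 1 : pathSets = ↑F
  have hset : pathSets (KK n) k = ↑F := by
    ext s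
    simp only [pathSets, Set.mem_setOf_eq, hF, Finset.coe_image, Set.mem_image,
      Finset.mem_coe]
    constructor
    · rintro ⟨u, v, w, hw, hlen, rfl⟩
      refine ⟨w.support, (mem_SF hn hk1).mpr ⟨hw.support_nodup, by simp [hlen], w.isChain_adj_support⟩, ?_⟩
      rw [hf]
      simp only [lEdges_walk w]
    · rintro ⟨L, hL, rfl⟩
      obtain ⟨hnd, hlen, hc⟩ := (mem_SF hn hk1).mp hL
      have hLne : L ≠ [] := by rintro rfl; simp at hlen
      refine ⟨_, _, walkOfChain (KK n) L hc hLne, ?_, ?_, ?_⟩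
      · exact SimpleGraph.Walk.IsPath.mk' (by rw [support_walkOfChain]; exact hnd)
      · have := SimpleGraph.Walk.length_support (walkOfChain (KK n) L hc hLne)
        rw [support_walkOfChain, hlen] at this
        omega
      · rw [lEdges_walk, support_walkOfChain]
  -- step 2
  have hncard : (pathSets (KK n) k).ncard = F.card := by
    rw [hset, Set.ncard_coe_finset]
  -- step 3 : fibers
  have hfiber : ∀ s ∈ F, ((SF n k hn).filter (fun L => f L = s)).card = 2 := by
    intro s hs
    obtain ⟨L0, hL0, rfl⟩ := Finset.mem_image.mp hs
    obtain ⟨hnd0, hlen0, hc0⟩ := (mem_SF hn hk1).mp hL0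
    have h2 : 2 ≤ L0.length := by omega
    have hfilter : (SF n k hn).filter (fun L => f L = f L0) = {L0, L0.reverse} := by
      ext L
      simp only [Finset.mem_filter, Finset.mem_insert, Finset.mem_singleton]
      constructor
      · rintro ⟨hL, hfe⟩
        obtain ⟨hnd, hlen, hc⟩ := (mem_SF hn hk1).mp hL
        exact lEdges_eq_or_reverse hnd0 hnd (by omega) h2 hfe.symm
      · rintro (rfl | rfl)
        · exact ⟨hL0, rfl⟩
        · refine ⟨(mem_SF hn hk1).mpr ⟨List.nodup_reverse.mpr hnd0, by simpa using hlen0,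
            chain'_rev hc0⟩, ?_⟩
          rw [hf]
          simp only [lEdges_reverse, List.toFinset_reverse]
    rw [hfilter, Finset.card_insert_of_notMem (by
      simp only [Finset.mem_singleton]
      exact fun h => reverse_ne_self hnd0 h2 h.symm), Finset.card_singleton]
  have hsum : (SF n k hn).card = 2 * F.card := by
    rw [Finset.card_eq_sum_card_fiberwise (fun L hL => Finset.mem_image_of_mem f hL),
      Finset.sum_congr rfl hfiber, Finset.sum_const, smul_eq_mul, mul_comm]
  -- step 4 : arithmetic
  rw [hncard, ← hsum, card_SF hn hk1]
  have e1 : (n - 1).descFactorial (k + 1) = (n - 1) * ((n - 2).descFactorial k) := by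
    have : n - 1 = (n - 2) + 1 := by omega
    rw [this, Nat.succ_descFactorial_succ]
  have e2 : (n - 2).descFactorial k = (n - 1 - k) * (n - 2).descFactorial (k - 1) := by
    have hk : k = (k - 1) + 1 := by omega
    rw [hk, Nat.descFactorial_succ]
    congr 1
    omega
  rw [e1, e2]
  ring
end
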